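/- arXiv:2506.17982 — 10 statements merged into one kernel-verified Lean document; each statement's English description precedes it below -/
import Mathlib

section
/- Let R be an integral domain. Then the following are equivalent: (i) every torsion-free R-module is flat; (ii) whenever M is a flat R-module and N is a relatively divisible submodule of M (meaning that for every r ∈ R, every element of N of the form r·m with m ∈ M is also of the form r·n with n ∈ N), the submodule N is pure in M (meaning that for every R-module P, the map P ⊗_R N → P ⊗_R M induced by the inclusion N → M is injective). -/
open LinearMap TensorProduct Function

/-- A Tor-free diagram chase: given exact pairs `X → Y → Z` (coefficients) and
`A → B → C` (modules), with `Y ⊗ A → Y ⊗ B` and `X ⊗ C → Y ⊗ C` injective,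
the map `Z ⊗ A → Z ⊗ B` is injective. -/
lemma chase_aux {R : Type} [CommRing R] {X Y Z A B C : Type}
    [AddCommGroup X] [Module R X] [AddCommGroup Y] [Module R Y]
    [AddCommGroup Z] [Module R Z] [AddCommGroup A] [Module R A]
    [AddCommGroup B] [Module R B] [AddCommGroup C] [Module R C]
    (f : X →ₗ[R] Y) (g : Y →ₗ[R] Z) (hg : Surjective g) (hfg : Exact f g)
    (ι : A →ₗ[R] B) (π : B →ₗ[R] C) (hπ : Surjective π) (hιπ : Exact ι π)
    (h1 : Injective (ι.lTensor Y)) (h2 : Injective (f.rTensor C)) :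
    Injective (ι.lTensor Z) := by
  rw [← LinearMap.ker_eq_bot, LinearMap.ker_eq_bot']
  intro t ht
  obtain ⟨u, rfl⟩ := LinearMap.rTensor_surjective A hg t
  set v := ι.lTensor Y u with hv
  have hvz : g.rTensor B v = 0 := by
    have : g.rTensor B ∘ₗ ι.lTensor Y = ι.lTensor Z ∘ₗ g.rTensor A := by
      rw [LinearMap.rTensor_comp_lTensor, LinearMap.lTensor_comp_rTensor]
    calc g.rTensor B v = (g.rTensor B ∘ₗ ι.lTensor Y) u := rfl
      _ = (ι.lTensor Z ∘ₗ g.rTensor A) u := by rw [this]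
      _ = 0 := ht
  -- exactness of X⊗B → Y⊗B → Z⊗B
  obtain ⟨w, hw⟩ := (rTensor_exact B hfg hg v).mp hvz
  -- push w to X ⊗ C: it dies, by h2
  have hπι : π ∘ₗ ι = 0 := by
    ext a; exact hιπ.apply_apply_eq_zero a
  have hwC : π.lTensor X w = 0 := by
    apply h2
    have comm : f.rTensor C ∘ₗ π.lTensor X = π.lTensor Y ∘ₗ f.rTensor B := by
      rw [LinearMap.rTensor_comp_lTensor, LinearMap.lTensor_comp_rTensor]
    have : f.rTensor C (π.lTensor X w) = π.lTensor Y (f.rTensor B w) :=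
      congrFun (congrArg DFunLike.coe comm) w
    rw [map_zero, this, hw, hv]
    have : π.lTensor Y ∘ₗ ι.lTensor Y = (π ∘ₗ ι).lTensor Y := (LinearMap.lTensor_comp Y π ι).symm
    calc π.lTensor Y (ι.lTensor Y u) = (π.lTensor Y ∘ₗ ι.lTensor Y) u := rfl
      _ = ((π ∘ₗ ι).lTensor Y) u := by rw [this]
      _ = 0 := by rw [hπι, LinearMap.lTensor_zero]; rfl
  -- exactness of X⊗A → X⊗B → X⊗C
  obtain ⟨s, hs⟩ := (lTensor_exact X hιπ hπ w).mp hwC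
  -- compare u with image of s
  have hu : f.rTensor A s = u := by
    apply h1
    have comm : ι.lTensor Y ∘ₗ f.rTensor A = f.rTensor B ∘ₗ ι.lTensor X := by
      rw [LinearMap.lTensor_comp_rTensor, LinearMap.rTensor_comp_lTensor]
    calc ι.lTensor Y (f.rTensor A s) = (ι.lTensor Y ∘ₗ f.rTensor A) s := rfl
      _ = (f.rTensor B ∘ₗ ι.lTensor X) s := by rw [comm]
      _ = f.rTensor B w := by rw [LinearMap.comp_apply, hs]
      _ = ι.lTensor Y u := hw
  have hgf : g ∘ₗ f = 0 := by ext x; exact hfg.apply_apply_eq_zero x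
  calc g.rTensor A u = g.rTensor A (f.rTensor A s) := by rw [hu]
    _ = ((g ∘ₗ f).rTensor A) s := by rw [LinearMap.rTensor_comp]; rfl
    _ = 0 := by rw [hgf, LinearMap.rTensor_zero]; rfl

/-- A flat module over a domain is torsion-free. -/
lemma flat_torsion_free {R M : Type} [CommRing R] [IsDomain R] [AddCommGroup M] [Module R M]
    [Module.Flat R M] {r : R} (hr : r ≠ 0) {x : M} (h : r • x = 0) : x = 0 := by
  have hreg : IsSMulRegular R r := fun a b hab => mul_left_cancel₀ hr hab
  have h1 : IsSMulRegular (M ⊗[R] R) r := hreg.lTensor M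
  have h2 : IsSMulRegular M r := ((TensorProduct.rid R M).isSMulRegular_congr r).mp h1
  exact h2 (show r • x = r • (0 : M) by rw [h, smul_zero])


/-- If `C = B ⧸ A` is flat and `Y` is flat with a presentation `X → Y → Z → 0`,
then `Z ⊗ A → Z ⊗ B` is injective. -/
lemma purity_of_flat_quotient {R : Type} [CommRing R] {X Y Z A B C : Type}
    [AddCommGroup X] [Module R X] [AddCommGroup Y] [Module R Y]
    [AddCommGroup Z] [Module R Z] [AddCommGroup A] [Module R A]
    [AddCommGroup B] [Module R B] [AddCommGroup C] [Module R C]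
    [Module.Flat R Y] [Module.Flat R C]
    (f : X →ₗ[R] Y) (g : Y →ₗ[R] Z) (hf : Injective f) (hg : Surjective g) (hfg : Exact f g)
    (ι : A →ₗ[R] B) (π : B →ₗ[R] C) (hι : Injective ι) (hπ : Surjective π) (hιπ : Exact ι π) :
    Injective (ι.lTensor Z) := by
  have h1 : Injective (ι.lTensor Y) :=
    Module.Flat.lTensor_preserves_injective_linearMap ι hι
  have h2 : Injective (f.rTensor C) :=
    Module.Flat.rTensor_preserves_injective_linearMap f hf
  exact chase_aux f g hg hfg ι π hπ hιπ h1 h2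

/-- If `Z` has a presentation `0 → X → Y → Z → 0` with `Y` flat such that `X` is pure in `Y`,
then `Z` is flat. -/
lemma flat_of_pure {R : Type} [CommRing R] {X Y Z : Type}
    [AddCommGroup X] [Module R X] [AddCommGroup Y] [Module R Y]
    [AddCommGroup Z] [Module R Z] [Module.Flat R Y]
    (f : X →ₗ[R] Y) (g : Y →ₗ[R] Z) (hg : Surjective g) (hfg : Exact f g)
    (hpure : ∀ (P : Type) [AddCommGroup P] [Module R P], Injective (f.lTensor P)) :
    Module.Flat R Z := by
  rw [Module.Flat.iff_lTensor_injective']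
  intro I
  have h1 : Injective (I.subtype.lTensor Y) :=
    Module.Flat.lTensor_preserves_injective_linearMap I.subtype I.injective_subtype
  have h2 : Injective (f.rTensor (R ⧸ I)) :=
    (f.lTensor_inj_iff_rTensor_inj (R ⧸ I)).mp (hpure (R ⧸ I))
  exact chase_aux f g hg hfg I.subtype I.mkQ I.mkQ_surjective
    (LinearMap.exact_subtype_mkQ I) h1 h2

set_option maxHeartbeats 2000000 in
/-- Let `R` be an integral domain. Then every torsion-free `R`-module is
flat if and only if every relatively divisible submodule of a flat `R`-module is pure. -/
theorem stmt0 (R : Type) [CommRing R] [IsDomain R] :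
    (∀ (M : Type) [AddCommGroup M] [Module R M],
        (∀ (r : R) (x : M), r • x = 0 → r = 0 ∨ x = 0) → Module.Flat R M)
    ↔
    (∀ (M : Type) [AddCommGroup M] [Module R M], Module.Flat R M →
      ∀ N : Submodule R M,
        (∀ r : R, ∀ x ∈ N, (∃ m : M, x = r • m) → ∃ n ∈ N, x = r • n) →
        ∀ (P : Type) [AddCommGroup P] [Module R P],
          Function.Injective (LinearMap.lTensor P N.subtype)) := by
  constructor
  · -- (i) → (ii)
    intro hTF M _ _ hM N hRD P _ _
    -- M ⧸ N is torsion-free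
    have hQtf : ∀ (r : R) (x : M ⧸ N), r • x = 0 → r = 0 ∨ x = 0 := by
      intro r x hx
      by_cases hr : r = 0
      · exact Or.inl hr
      · right
        obtain ⟨m, rfl⟩ := Submodule.Quotient.mk_surjective N x
        rw [← Submodule.Quotient.mk_smul, Submodule.Quotient.mk_eq_zero] at hx
        obtain ⟨n, hn, heq⟩ := hRD r (r • m) hx ⟨m, rfl⟩
        have : r • (m - n) = 0 := by rw [smul_sub, ← heq, sub_self]
        have hmn : m - n = 0 := flat_torsion_free hr this
        have : m = n := by rwa [sub_eq_zero] at hmn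
        rw [Submodule.Quotient.mk_eq_zero, this]; exact hn
    have hQ : Module.Flat R (M ⧸ N) := hTF _ hQtf
    -- free cover of P
    set F := (P →₀ R) with hF
    set g : F →ₗ[R] P := Finsupp.linearCombination R _root_.id with hgdef
    have hgsurj : Surjective g := Finsupp.linearCombination_id_surjective R P
    set K := LinearMap.ker g with hK
    have hexact : Exact (K.subtype) g := g.exact_subtype_ker_map
    exact purity_of_flat_quotient (X := K) (Y := F) (Z := P) (A := N) (B := M) (C := M ⧸ N) K.subtype g K.injective_subtype hgsurj hexact
      N.subtype N.mkQ N.injective_subtype N.mkQ_surjective (LinearMap.exact_subtype_mkQ N)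
  · -- (ii) → (i)
    intro hRDpure M _ _ hMtf
    -- free cover of M
    set F := (M →₀ R) with hF
    set g : F →ₗ[R] M := Finsupp.linearCombination R _root_.id with hgdef
    have hgsurj : Surjective g := Finsupp.linearCombination_id_surjective R M
    set S := LinearMap.ker g with hS
    have hexact : Exact (S.subtype) g := g.exact_subtype_ker_map
    -- S is relatively divisible in F
    have hRD : ∀ r : R, ∀ x ∈ S, (∃ m : F, x = r • m) → ∃ n ∈ S, x = r • n := by
      intro r x hx ⟨m, hm⟩
      by_cases hr : r = 0
      · exact ⟨0, S.zero_mem, by rw [hm, hr, zero_smul, zero_smul]⟩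
      · refine ⟨m, ?_, hm⟩
        have : r • g m = 0 := by
          rw [← map_smul, ← hm]; exact hx
        rcases hMtf r (g m) this with h | h
        · exact absurd h hr
        · exact h
    have hFflat : Module.Flat R F := inferInstance
    have hpure := hRDpure F hFflat S hRD
    refine flat_of_pure (R := R) (X := S) (Y := F) (Z := M) S.subtype g hgsurj hexact ?_
    intro P _ _
    exact hpure P
end

section
/- Let R be a countable Prüfer domain with fraction field K, let A be a countable flat R-module, and let I be a nonzero finitely generated ideal of R. Let R[I⁻¹] denote the R-submodule of K obtained as the union (supremum) over n ∈ ℕ of the fractional ideals (I⁻¹)ⁿ, where I⁻¹ = {x ∈ K : x·I ⊆ R} is the inverse of I as a fractional ideal. Then I·A = A (A is I-divisible) if and only if every short exact sequence 0 → A → X → R[I⁻¹] → 0 of R-modules splits (equivalently, Ext¹_R(R[I⁻¹], A) = 0). -/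
open TensorProduct



theorem auxGlue {R M N : Type} [CommRing R] [AddCommGroup M] [Module R M]
    [AddCommGroup N] [Module R N]
    (Jc : ℕ →o Submodule R M) (hm : ∀ n, ↥(Jc n) →ₗ[R] N)
    (hcompat : ∀ n (x : ↥(Jc n)),
      hm (n + 1) (Submodule.inclusion (Jc.monotone (Nat.le_succ n)) x) = hm n x) :
    ∃ H : ↥(⨆ n, Jc n) →ₗ[R] N, ∀ n (x : ↥(Jc n)),
      H (Submodule.inclusion (le_iSup (fun n => Jc n) n) x) = hm n x := by
  classical
  have compat' : ∀ n m (h : n ≤ m) (x : M) (hx : x ∈ Jc n),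
      hm m ⟨x, Jc.monotone h hx⟩ = hm n ⟨x, hx⟩ := by
    intro n m h
    induction m, h using Nat.le_induction with
    | base => intro x hx; rfl
    | succ m hm' ih =>
      intro x hx
      have h2 := hcompat m ⟨x, Jc.monotone hm' hx⟩
      exact h2.trans (ih x hx)
  have hmem : ∀ x : ↥(⨆ n, Jc n), ∃ n, (x : M) ∈ Jc n := fun x =>
    (Submodule.mem_iSup_of_chain Jc x.1).mp x.2
  choose idx hidx using hmem
  have agree : ∀ (x : ↥(⨆ n, Jc n)) (n : ℕ) (hx : (x : M) ∈ Jc n),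
      hm (idx x) ⟨x.1, hidx x⟩ = hm n ⟨x.1, hx⟩ := by
    intro x n hx
    have h1 := compat' (idx x) (max (idx x) n) (le_max_left _ _) x.1 (hidx x)
    have h2 := compat' n (max (idx x) n) (le_max_right _ _) x.1 hx
    exact h1.symm.trans h2
  refine ⟨⟨⟨fun x => hm (idx x) ⟨x.1, hidx x⟩, ?_⟩, ?_⟩, ?_⟩
  · intro x y
    have hx : (x : M) ∈ Jc (max (idx x) (idx y)) := Jc.monotone (le_max_left _ _) (hidx x)
    have hy : (y : M) ∈ Jc (max (idx x) (idx y)) := Jc.monotone (le_max_right _ _) (hidx y)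
    have hxy : ((x + y : ↥(⨆ n, Jc n)) : M) ∈ Jc (max (idx x) (idx y)) := add_mem hx hy
    rw [agree (x + y) _ hxy, agree x _ hx, agree y _ hy]
    have h3 : (⟨(x + y : ↥(⨆ n, Jc n)).1, hxy⟩ : ↥(Jc (max (idx x) (idx y))))
        = ⟨x.1, hx⟩ + ⟨y.1, hy⟩ := rfl
    rw [h3, map_add]
  · intro r x
    dsimp only
    have hrx : ((r • x : ↥(⨆ n, Jc n)) : M) ∈ Jc (idx x) :=
      Submodule.smul_mem _ r (hidx x)
    rw [agree (r • x) _ hrx]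
    have h3 : (⟨(r • x : ↥(⨆ n, Jc n)).1, hrx⟩ : ↥(Jc (idx x))) = r • ⟨x.1, hidx x⟩ := rfl
    rw [h3, map_smul]
    rfl
  · intro n x
    exact agree _ n x.2

theorem auxMul {R K V : Type} [CommRing R] [IsDomain R] [Field K] [Algebra R K]
    [IsFractionRing R K] [AddCommGroup V] [Module R V] [Module K V] [IsScalarTower R K V]
    [NoZeroSMulDivisors K V]
    (W : Submodule R K) (h1 : (1 : K) ∈ W) (φ : ↥W →ₗ[R] V) (x : ↥W) :
    φ x = (x : K) • φ ⟨1, h1⟩ := by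
  have halg : Function.Injective (algebraMap R K) := IsFractionRing.injective R K
  have pair : ∀ x y : ↥W, (y : K) • φ x = (x : K) • φ y := by
    intro x y
    obtain ⟨⟨a1, r1⟩, hx1⟩ := IsLocalization.surj (nonZeroDivisors R) (x : K)
    obtain ⟨⟨a2, r2⟩, hy2⟩ := IsLocalization.surj (nonZeroDivisors R) (y : K)
    have hr12 : algebraMap R K ((r1 : R) * (r2 : R)) ≠ 0 := by
      intro h
      have h0 : ((r1 : R) * (r2 : R)) = 0 := halg (by rw [h, map_zero])
      exact nonZeroDivisors.ne_zero (mul_mem r1.2 r2.2) h0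
    refine smul_right_injective V hr12 ?_
    show algebraMap R K ((r1 : R) * (r2 : R)) • ((y : K) • φ x)
      = algebraMap R K ((r1 : R) * (r2 : R)) • ((x : K) • φ y)
    have e1 : algebraMap R K ((r1 : R) * (r2 : R)) • ((y : K) • φ x)
        = φ (((r1 : R) * a2) • x) := by
      rw [smul_smul]
      have hs : algebraMap R K ((r1 : R) * (r2 : R)) * (y : K)
          = algebraMap R K ((r1 : R) * a2) := by
        rw [map_mul, map_mul, ← hy2]; ring
      rw [hs, algebraMap_smul]
      exact (map_smul φ _ _).symm
    have e2 : algebraMap R K ((r1 : R) * (r2 : R)) • ((x : K) • φ y)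
        = φ (((r2 : R) * a1) • y) := by
      rw [smul_smul]
      have hs : algebraMap R K ((r1 : R) * (r2 : R)) * (x : K)
          = algebraMap R K ((r2 : R) * a1) := by
        rw [map_mul, map_mul, ← hx1]; ring
      rw [hs, algebraMap_smul]
      exact (map_smul φ _ _).symm
    rw [e1, e2]
    apply congrArg
    apply Subtype.ext
    rw [SetLike.val_smul, SetLike.val_smul, Algebra.smul_def, Algebra.smul_def,
      map_mul, map_mul, ← hy2, ← hx1]
    ring
  have h := pair x ⟨1, h1⟩
  have h' : (1 : K) • φ x = (x : K) • φ ⟨1, h1⟩ := h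
  rw [one_smul] at h'
  exact h'


theorem auxProj {R K : Type} [CommRing R] [IsDomain R] [Field K] [Algebra R K]
    [IsFractionRing R K]
    (hPrufer : ∀ J : Ideal R, J.FG → Module.Projective R J)
    (W : FractionalIdeal (nonZeroDivisors R) K) (hWfg : (W : Submodule R K).FG) :
    Module.Projective R ↥(W : Submodule R K) := by
  classical
  have halg : Function.Injective (algebraMap R K) := IsFractionRing.injective R K
  obtain ⟨a, haS, ha⟩ := W.isFractional
  have ha0 : algebraMap R K a ≠ 0 := fun h =>
    nonZeroDivisors.ne_zero haS (halg (by rw [h, map_zero]))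
  set μ : K →ₗ[R] K := LinearMap.mulLeft R (algebraMap R K a) with hμ
  have hμinj : Function.Injective μ := fun x y h => by
    have : algebraMap R K a * x = algebraMap R K a * y := h
    exact mul_left_cancel₀ ha0 this
  set N : Ideal R := Submodule.comap (Algebra.linearMap R K) (Submodule.map μ (W : Submodule R K)) with hN
  have hNmap : Submodule.map (Algebra.linearMap R K) N = (W : Submodule R K).map μ := by
    apply le_antisymm (Submodule.map_comap_le _ _)
    intro z hz
    obtain ⟨b, hb, rfl⟩ := hz
    obtain ⟨r, hr⟩ := ha b hb
    have hμb : μ b = algebraMap R K r := by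
      rw [hμ]
      show algebraMap R K a * b = algebraMap R K r
      rw [← Algebra.smul_def, hr]
    refine ⟨r, ?_, hμb.symm⟩
    show algebraMap R K r ∈ (W : Submodule R K).map μ
    exact hμb ▸ ⟨b, hb, rfl⟩
  have hNfg : N.FG := by
    apply Submodule.fg_of_fg_map_injective (Algebra.linearMap R K) halg
    rw [hNmap]
    exact Submodule.FG.map _ hWfg
  have hprojN : Module.Projective R ↥N := hPrufer N hNfg
  have e1 : ↥(W : Submodule R K) ≃ₗ[R] ↥((W : Submodule R K).map μ) :=
    Submodule.equivMapOfInjective μ hμinj _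
  have e2 : ↥N ≃ₗ[R] ↥(Submodule.map (Algebra.linearMap R K) N) :=
    Submodule.equivMapOfInjective (Algebra.linearMap R K) halg N
  have e3 : ↥(Submodule.map (Algebra.linearMap R K) N) ≃ₗ[R] ↥((W : Submodule R K).map μ) :=
    LinearEquiv.ofEq _ _ hNmap
  exact Module.Projective.of_equiv ((e2.trans e3).trans e1.symm)

theorem auxA {R : Type} [CommRing R] [IsDomain R] {K : Type} [Field K] [Algebra R K]
    [IsFractionRing R K] (I : Ideal R) (hI : I ≠ ⊥) (hproj : Module.Projective R I) :
    (I : FractionalIdeal (nonZeroDivisors R) K) *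
      (I : FractionalIdeal (nonZeroDivisors R) K)⁻¹ = 1 := by
  classical
  set I' : FractionalIdeal (nonZeroDivisors R) K := (I : FractionalIdeal (nonZeroDivisors R) K)
    with hI'def
  have hI'0 : I' ≠ 0 := FractionalIdeal.coeIdeal_ne_zero.mpr hI
  obtain ⟨s, hs⟩ := Module.projective_def.mp hproj
  obtain ⟨x₀, hx₀I, hx₀⟩ := (Submodule.ne_bot_iff I).mp hI
  set ξ : ↥I := ⟨x₀, hx₀I⟩ with hξdef
  have halg : Function.Injective (algebraMap R K) := IsFractionRing.injective R K
  have halgx₀ : algebraMap R K x₀ ≠ 0 := fun h => hx₀ (halg (by simpa using h))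
  have key : ∀ (i y z : ↥I), (y : R) * s z i = (z : R) * s y i := by
    intro i y z
    have h1 : ((y : R) • z : ↥I) = (z : R) • y := Subtype.ext (mul_comm _ _)
    have h2 := congrArg (fun w => s w i) h1
    simpa [map_smul, Finsupp.smul_apply, smul_eq_mul] using h2
  set q : ↥I → K := fun i => algebraMap R K (s ξ i) / algebraMap R K x₀ with hqdef
  have hq : ∀ (i : ↥I) (r : R) (hr : r ∈ I),
      q i * algebraMap R K r = algebraMap R K (s ⟨r, hr⟩ i) := by
    intro i r hr
    rw [hqdef]
    rw [div_mul_eq_mul_div, div_eq_iff halgx₀, ← _root_.map_mul, ← _root_.map_mul]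
    apply congrArg
    have k2 : x₀ * s ⟨r, hr⟩ i = r * s ξ i := key i ξ ⟨r, hr⟩
    linear_combination -k2
  have hqmem : ∀ i : ↥I, q i ∈ I'⁻¹ := by
    intro i
    rw [FractionalIdeal.mem_inv_iff hI'0]
    intro y hy
    obtain ⟨r, hrI, rfl⟩ := (FractionalIdeal.mem_coeIdeal _).mp hy
    rw [hq i r hrI]
    exact FractionalIdeal.coe_mem_one _ _
  have hrepr : x₀ = ((s ξ).support.sum fun i => s ξ i * (i : R)) := by
    have h2 := congrArg (Subtype.val) (hs ξ)
    rw [Finsupp.linearCombination_apply, Finsupp.sum] at h2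
    have h3 : ((∑ a ∈ (s ξ).support, (s ξ) a • id a : ↥I) : R)
        = ∑ a ∈ (s ξ).support, (s ξ) a * (a : R) := by
      rw [AddSubmonoidClass.coe_finset_sum]
      simp [smul_eq_mul]
    rw [h3] at h2
    exact h2.symm
  have h3 : (1 : K) = (s ξ).support.sum fun i => algebraMap R K (i : R) * q i := by
    apply mul_left_cancel₀ halgx₀
    rw [mul_one, Finset.mul_sum]
    have hterm : ∀ i ∈ (s ξ).support,
        algebraMap R K x₀ * (algebraMap R K (i : R) * q i)
          = algebraMap R K (s ξ i * (i : R)) := by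
      intro i _
      have h4 : q i * algebraMap R K x₀ = algebraMap R K (s ξ i) := hq i x₀ hx₀I
      rw [_root_.map_mul, ← h4]
      ring
    rw [Finset.sum_congr rfl hterm, ← _root_.map_sum, ← hrepr]
  have hone : (1 : K) ∈ I' * I'⁻¹ := by
    rw [h3, ← FractionalIdeal.mem_coe]
    apply Submodule.sum_mem
    intro i _
    rw [FractionalIdeal.mem_coe]
    exact FractionalIdeal.mul_mem_mul ((FractionalIdeal.mem_coeIdeal _).mpr ⟨i, i.2, rfl⟩) (hqmem i)
  apply le_antisymm
  · rw [FractionalIdeal.mul_le]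
    intro i hi j hj
    rw [FractionalIdeal.inv_eq, FractionalIdeal.mem_div_iff_of_ne_zero hI'0] at hj
    rw [mul_comm]
    exact hj i hi
  · exact FractionalIdeal.one_le.mpr hone



theorem auxUncount : ¬ Countable (ℕ → Bool) := by
  intro h
  have e : Countable (Set ℕ) :=
    Countable.of_equiv _ ((Equiv.refl ℕ).arrowCongr Equiv.propEquivBool).symm
  obtain ⟨f, hf⟩ := (countable_iff_exists_surjective.mp e)
  exact Function.cantor_surjective f hf

/-- The `R`-submodule `R[I⁻¹]` of the fraction field `K`, obtained as the union (supremum)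
over `n ∈ ℕ` of the powers `(I⁻¹)ⁿ` of the inverse of `I` as a fractional ideal. -/
noncomputable def invPowersUnion (R : Type) [CommRing R] [IsDomain R]
    (K : Type) [Field K] [Algebra R K] [IsFractionRing R K] (I : Ideal R) :
    Submodule R K :=
  ⨆ n : ℕ,
    ((((I : FractionalIdeal (nonZeroDivisors R) K))⁻¹ ^ n :
        FractionalIdeal (nonZeroDivisors R) K) : Submodule R K)

set_option maxHeartbeats 2000000 in
/-- Let `R` be a countable Prüfer domain with fraction field `K`, `A` a
countable flat `R`-module, and `I` a nonzero finitely generated ideal of `R`. Then `I·A = A`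
if and only if every short exact sequence `0 → A → X → R[I⁻¹] → 0` splits. -/
theorem stmt8 (R : Type) [CommRing R] [IsDomain R] [Countable R]
    (hPrufer : ∀ J : Ideal R, J.FG → Module.Projective R J)
    (K : Type) [Field K] [Algebra R K] [IsFractionRing R K]
    (A : Type) [AddCommGroup A] [Module R A] [Countable A] [Module.Flat R A]
    (I : Ideal R) (hI : I ≠ ⊥) (hIfg : I.FG) :
    I • (⊤ : Submodule R A) = ⊤ ↔
      ∀ (X : Type) [AddCommGroup X] [Module R X]
        (f : A →ₗ[R] X) (g : X →ₗ[R] ↥(invPowersUnion R K I)),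
        Function.Injective f → Function.Surjective g →
        LinearMap.range f = LinearMap.ker g →
        ∃ h : ↥(invPowersUnion R K I) →ₗ[R] X, g ∘ₗ h = LinearMap.id := by
  classical
  -- ## shared setup
  set I' : FractionalIdeal (nonZeroDivisors R) K := (I : FractionalIdeal (nonZeroDivisors R) K)
    with hI'def
  have hunit : I' * I'⁻¹ = 1 := auxA I hI (hPrufer I hIfg)
  set Jc : ℕ → Submodule R K :=
    fun n => ((I'⁻¹ ^ n : FractionalIdeal (nonZeroDivisors R) K) : Submodule R K) with hJdef
  have hone_le_inv : (1 : FractionalIdeal (nonZeroDivisors R) K) ≤ I'⁻¹ := by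
    have h1 : I' ≤ 1 := FractionalIdeal.coeIdeal_le_one
    calc (1 : FractionalIdeal (nonZeroDivisors R) K) = I' * I'⁻¹ := hunit.symm
      _ ≤ 1 * I'⁻¹ := mul_left_mono (a := I'⁻¹) h1
      _ = I'⁻¹ := one_mul _
  have hJmono : Monotone Jc := by
    apply monotone_nat_of_le_succ
    intro n
    apply FractionalIdeal.coe_le_coe.mpr
    rw [pow_succ]
    calc I'⁻¹ ^ n = I'⁻¹ ^ n * 1 := (mul_one _).symm
      _ ≤ I'⁻¹ ^ n * I'⁻¹ := mul_right_mono (a := I'⁻¹ ^ n) hone_le_inv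
  have hJ1 : ∀ n, (1 : K) ∈ Jc n := by
    intro n
    refine hJmono (Nat.zero_le n) ?_
    show (1 : K) ∈ ((I'⁻¹ ^ 0 : FractionalIdeal (nonZeroDivisors R) K) : Submodule R K)
    rw [pow_zero, FractionalIdeal.coe_one]
    exact Submodule.one_le.mp le_rfl
  have hDeq : invPowersUnion R K I = ⨆ n, Jc n := rfl
  have hJD : ∀ n, Jc n ≤ invPowersUnion R K I := fun n => hDeq ▸ le_iSup Jc n
  have hmulJ : ∀ (n : ℕ) (r : R), r ∈ I → ∀ x ∈ Jc (n + 1), algebraMap R K r * x ∈ Jc n := by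
    intro n r hr x hx
    have h1 : algebraMap R K r ∈ I' := (FractionalIdeal.mem_coeIdeal _).mpr ⟨r, hr, rfl⟩
    have h2 : algebraMap R K r * x ∈ I' * I'⁻¹ ^ (n + 1) :=
      FractionalIdeal.mul_mem_mul h1 (FractionalIdeal.mem_coe.mp hx)
    have h3 : I' * I'⁻¹ ^ (n + 1) = I'⁻¹ ^ n := by
      have : I' * I'⁻¹ ^ (n + 1) = I'⁻¹ ^ n * (I' * I'⁻¹) := by ring
      rw [this, hunit, mul_one]
    rw [h3] at h2
    exact FractionalIdeal.mem_coe.mpr h2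
  set ι : A →ₗ[R] K ⊗[R] A :=
    (LinearMap.rTensor A (Algebra.linearMap R K)) ∘ₗ (TensorProduct.lid R A).symm.toLinearMap
    with hιdef
  have hιinj : Function.Injective ι :=
    (Module.Flat.rTensor_preserves_injective_linearMap (M := A) (Algebra.linearMap R K)
      (IsFractionRing.injective R K)).comp (TensorProduct.lid R A).symm.injective
  set B : Submodule R (K ⊗[R] A) := LinearMap.range ι with hBdef
  constructor
  · -- ## forward direction
    intro hdiv X _ _ f g hf hg hfg
    have hBdiv : ∀ n, ∀ x ∈ Jc n, ∀ w ∈ B, x • w ∈ B := by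
      intro n
      induction n with
      | zero =>
        intro x hx w hw
        rw [hJdef] at hx
        simp only [pow_zero] at hx
        rw [FractionalIdeal.coe_one, Submodule.one_eq_range] at hx
        obtain ⟨r, rfl⟩ := hx
        show (Algebra.linearMap R K r) • w ∈ B
        rw [show ((Algebra.linearMap R K r) : K) • w = r • w from algebraMap_smul _ r w]
        exact Submodule.smul_mem _ r hw
      | succ n ih =>
        intro x hx w hw
        obtain ⟨a, rfl⟩ := hw
        have haI : a ∈ I • (⊤ : Submodule R A) := by rw [hdiv]; trivial
        refine Submodule.smul_induction_on (p := fun b => x • ι b ∈ B) haI ?_ ?_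
        · intro r hr a' _
          have hmem := ih _ (hmulJ n r hr x hx) (ι a') ⟨a', rfl⟩
          have hcalc : x • ι (r • a') = (algebraMap R K r * x) • ι a' := by
            rw [map_smul, smul_comm x r (ι a'), ← algebraMap_smul K r (x • ι a'), smul_smul]
          rw [hcalc]
          exact hmem
        · intro a1 a2 h1 h2
          rw [map_add, smul_add]
          exact Submodule.add_mem _ h1 h2
    have hgf : ∀ a, g (f a) = 0 := by
      intro a
      have : f a ∈ LinearMap.ker g := hfg ▸ LinearMap.mem_range_self f a
      exact this
    set inclN : ∀ n, ↥(Jc n) →ₗ[R] ↥(invPowersUnion R K I) :=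
      fun n => Submodule.inclusion (hJD n) with hinclN
    have hproj : ∀ n, Module.Projective R ↥(Jc n) := by
      intro n
      apply auxProj hPrufer
      apply FractionalIdeal.fg_of_isUnit
      have hu : IsUnit I' := isUnit_iff_exists_inv.mpr ⟨I'⁻¹, hunit⟩
      have hu' : IsUnit I'⁻¹ := isUnit_iff_exists_inv.mpr ⟨I', by rw [mul_comm]; exact hunit⟩
      exact hu'.pow n
    have base : {h : ↥(Jc 0) →ₗ[R] X // g ∘ₗ h = inclN 0} := by
      letI := hproj 0
      exact Classical.indefiniteDescription _
        (Module.projective_lifting_property g (inclN 0) hg)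
    have step : ∀ n (prev : {h : ↥(Jc n) →ₗ[R] X // g ∘ₗ h = inclN n}),
        {h' : ↥(Jc (n + 1)) →ₗ[R] X //
          g ∘ₗ h' = inclN (n + 1) ∧
          ∀ x : ↥(Jc n), h' (Submodule.inclusion (hJmono (Nat.le_succ n)) x) = prev.1 x} := by
      intro n prev
      letI := hproj (n + 1)
      obtain ⟨ℓ, hℓ⟩ := Classical.indefiniteDescription _
        (Module.projective_lifting_property g (inclN (n + 1)) hg)
      set incl : ↥(Jc n) →ₗ[R] ↥(Jc (n + 1)) :=
        Submodule.inclusion (hJmono (Nat.le_succ n)) with hincl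
      set δ : ↥(Jc n) →ₗ[R] X := ℓ ∘ₗ incl - prev.1 with hδdef
      have hδ : ∀ x, δ x ∈ LinearMap.range f := by
        intro x
        rw [hfg, LinearMap.mem_ker]
        have e1 : g (ℓ (incl x)) = inclN (n + 1) (incl x) := LinearMap.congr_fun hℓ (incl x)
        have e2 : g (prev.1 x) = inclN n x := LinearMap.congr_fun prev.2 x
        have e3 : inclN (n + 1) (incl x) = inclN n x := Subtype.ext rfl
        rw [hδdef]
        simp only [LinearMap.sub_apply, LinearMap.comp_apply, map_sub]
        rw [e1, e2, e3, sub_self]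
      set e := LinearEquiv.ofInjective f hf with hedef
      set δ' : ↥(Jc n) →ₗ[R] A :=
        e.symm.toLinearMap ∘ₗ (LinearMap.codRestrict (LinearMap.range f) δ hδ) with hδ'def
      have hfδ' : ∀ x, f (δ' x) = δ x := by
        intro x
        have h4 := e.apply_symm_apply (LinearMap.codRestrict (LinearMap.range f) δ hδ x)
        have h5 := congrArg Subtype.val h4
        simpa [hδ'def, hedef] using h5
      set ψ : ↥(Jc n) →ₗ[R] K ⊗[R] A := ι ∘ₗ δ' with hψdef
      set u : K ⊗[R] A := ψ ⟨1, hJ1 n⟩ with hudef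
      have hψu : ∀ x : ↥(Jc n), ψ x = (x : K) • u := fun x => auxMul (Jc n) (hJ1 n) ψ x
      have huB : u ∈ B := ⟨δ' ⟨1, hJ1 n⟩, rfl⟩
      have hzuB : ∀ z : ↥(Jc (n + 1)), (z : K) • u ∈ B := fun z =>
        hBdiv (n + 1) z.1 z.2 u huB
      set τ : ↥(Jc (n + 1)) →ₗ[R] K ⊗[R] A :=
        ((LinearMap.toSpanSingleton K (K ⊗[R] A) u).restrictScalars R) ∘ₗ
          (Jc (n + 1)).subtype with hτdef
      have hτ : ∀ z, τ z = (z : K) • u := fun z => rfl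
      set eB := LinearEquiv.ofInjective ι hιinj with heBdef
      set δ'' : ↥(Jc (n + 1)) →ₗ[R] A :=
        eB.symm.toLinearMap ∘ₗ (LinearMap.codRestrict B τ hzuB) with hδ''def
      have hιδ'' : ∀ z, ι (δ'' z) = (z : K) • u := by
        intro z
        have h4 := eB.apply_symm_apply (LinearMap.codRestrict B τ hzuB z)
        have h5 := congrArg Subtype.val h4
        exact h5
      refine ⟨ℓ - f ∘ₗ δ'', ?_, ?_⟩
      · ext z
        simp only [LinearMap.comp_apply, LinearMap.sub_apply, map_sub, hgf, sub_zero]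
        exact congrArg Subtype.val (LinearMap.congr_fun hℓ z)
      · intro x
        have h6 : δ'' (incl x) = δ' x := by
          apply hιinj
          rw [hιδ'' (incl x)]
          have h7 : ((incl x : ↥(Jc (n+1))) : K) = (x : K) := rfl
          rw [h7, ← hψu x]
          rfl
        show ℓ (incl x) - f (δ'' (incl x)) = prev.1 x
        rw [h6, hfδ' x, hδdef]
        simp only [LinearMap.sub_apply, LinearMap.comp_apply]
        abel
    set G : ∀ n, {h : ↥(Jc n) →ₗ[R] X // g ∘ₗ h = inclN n} :=
      fun n => Nat.rec base (fun n prev => ⟨(step n prev).1, (step n prev).2.1⟩) n with hGdef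
    have hGcompat : ∀ n (x : ↥(Jc n)),
        (G (n + 1)).1 (Submodule.inclusion (hJmono (Nat.le_succ n)) x) = (G n).1 x :=
      fun n x => (step n (G n)).2.2 x
    obtain ⟨H, hH⟩ := auxGlue ⟨Jc, hJmono⟩ (fun n => (G n).1) hGcompat
    refine ⟨H, ?_⟩
    ext ξ
    obtain ⟨n, hξn⟩ := (Submodule.mem_iSup_of_chain ⟨Jc, hJmono⟩ ξ.1).mp (hDeq ▸ ξ.2)
    have h9 : g (H ξ) = ξ := by
      calc g (H ξ) = g ((G n).1 ⟨ξ.1, hξn⟩) :=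
            congrArg g ((congrArg H (Subtype.ext rfl)).trans (hH n ⟨ξ.1, hξn⟩))
        _ = inclN n ⟨ξ.1, hξn⟩ := LinearMap.congr_fun (G n).2 ⟨ξ.1, hξn⟩
        _ = ξ := Subtype.ext rfl
    exact congrArg Subtype.val h9
  · -- ## converse
    intro hsplit
    by_contra hne
    -- the "colon" submodules
    set Aset : ℕ → Submodule R (K ⊗[R] A) := fun n =>
      { carrier := {w | ∀ x ∈ Jc n, x • w ∈ B}
        add_mem' := fun hw1 hw2 x hx => by
          rw [smul_add]; exact Submodule.add_mem _ (hw1 x hx) (hw2 x hx)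
        zero_mem' := fun x hx => by rw [smul_zero]; exact Submodule.zero_mem _
        smul_mem' := fun r w hw x hx => by
          rw [smul_comm]; exact Submodule.smul_mem _ r (hw x hx) } with hAsetdef
    have hAmem : ∀ n w, w ∈ Aset n ↔ ∀ x ∈ Jc n, x • w ∈ B := fun n w => Iff.rfl
    have hAanti : ∀ {n m : ℕ}, n ≤ m → Aset m ≤ Aset n := fun {n m} h w hw x hx =>
      hw x (hJmono h hx)
    have hAB : ∀ n, Aset n ≤ B := by
      intro n w hw
      have := hw 1 (hJ1 n)
      rwa [one_smul] at this
    -- strict descent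
    have hstrict : ∀ n, ¬ (Aset n ≤ Aset (n + 1)) := by
      intro n hle
      apply hne
      rw [eq_top_iff]
      intro a _
      set T : Submodule R (K ⊗[R] A) := Submodule.map ι (I • (⊤ : Submodule R A)) with hTdef
      have hpow1 : (I'⁻¹ ^ n) * (I' ^ n) = 1 := by
        rw [← mul_pow, mul_comm I'⁻¹ I', hunit, one_pow]
      have hpow2 : (I' ^ (n + 1)) * (I'⁻¹ ^ (n + 1)) = 1 := by
        rw [← mul_pow, hunit, one_pow]
      have hβA : ∀ β ∈ ((I' ^ n : FractionalIdeal (nonZeroDivisors R) K) : Submodule R K),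
          ∀ w ∈ B, β • w ∈ Aset n := by
        intro β hβm w hw y hy
        rw [smul_smul]
        have hyβ : y * β ∈ ((I'⁻¹ ^ n * I' ^ n : FractionalIdeal (nonZeroDivisors R) K) :
            Submodule R K) := by
          rw [FractionalIdeal.coe_mul]
          exact Submodule.mul_mem_mul
            (show y ∈ ((I'⁻¹ ^ n : FractionalIdeal (nonZeroDivisors R) K) : Submodule R K)
              from hy) hβm
        rw [hpow1, FractionalIdeal.coe_one, Submodule.one_eq_range] at hyβ
        obtain ⟨r, hr⟩ := hyβ
        rw [← hr]
        rw [show ((Algebra.linearMap R K r : K)) • w = r • w from algebraMap_smul K r w]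
        exact Submodule.smul_mem _ r hw
      have hmain : ∀ z ∈ ((I' ^ (n + 1) : FractionalIdeal (nonZeroDivisors R) K) :
            Submodule R K) * ((I'⁻¹ ^ (n + 1) : FractionalIdeal (nonZeroDivisors R) K) :
            Submodule R K), z • ι a ∈ T := by
        intro z hz
        refine Submodule.mul_induction_on hz ?_ ?_
        · intro c hc d hd
          have hc' : c ∈ ((I' : FractionalIdeal (nonZeroDivisors R) K) : Submodule R K) *
              ((I' ^ n : FractionalIdeal (nonZeroDivisors R) K) : Submodule R K) := by
            rw [← FractionalIdeal.coe_mul]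
            have he : I' * I' ^ n = I' ^ (n + 1) := (pow_succ' I' n).symm
            rw [he]
            exact hc
          refine Submodule.mul_induction_on (C := fun c => (c * d) • ι a ∈ T) hc' ?_ ?_
          · intro α hα β hβ2
            obtain ⟨r, hr, hreq⟩ :=
              (FractionalIdeal.mem_coeIdeal _).mp (FractionalIdeal.mem_coe.mp hα)
            have hβa : β • ι a ∈ Aset n := hβA β hβ2 (ι a) ⟨a, rfl⟩
            have hdb : d • (β • ι a) ∈ B := hle hβa d (show d ∈ Jc (n + 1) from hd)
            obtain ⟨a2, ha2⟩ := hdb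
            have e : (α * β * d) • ι a = ι (r • a2) := by
              rw [mul_assoc, mul_smul, mul_comm β d, mul_smul, ← ha2, ← hreq,
                algebraMap_smul, ← map_smul]
            rw [e]
            exact ⟨r • a2, Submodule.smul_mem_smul hr trivial, rfl⟩
          · intro c1 c2 h1 h2
            rw [add_mul, add_smul]
            exact Submodule.add_mem _ h1 h2
        · intro z1 z2 h1 h2
          rw [add_smul]
          exact Submodule.add_mem _ h1 h2
      have h1m : (1 : K) ∈ ((I' ^ (n + 1) : FractionalIdeal (nonZeroDivisors R) K) :
          Submodule R K) * ((I'⁻¹ ^ (n + 1) : FractionalIdeal (nonZeroDivisors R) K) :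
          Submodule R K) := by
        rw [← FractionalIdeal.coe_mul, hpow2, FractionalIdeal.coe_one]
        exact Submodule.one_le.mp le_rfl
      have hw := hmain 1 h1m
      rw [one_smul] at hw
      obtain ⟨a', ha', haa⟩ := hw
      exact hιinj haa ▸ ha'
    -- choose witnesses of strictness
    have hd : ∀ n, ∃ d, d ∈ Aset n ∧ d ∉ Aset (n + 1) := by
      intro n
      by_contra hcon
      push_neg at hcon
      exact hstrict n (fun w hw => hcon w hw)
    choose dseq hdmem hdnot using hd
    set ps : (ℕ → Bool) → ℕ → K ⊗[R] A :=
      fun ε n => (Finset.range n).sum (fun k => if ε k then dseq k else 0) with hpsdef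
    have hps_step : ∀ ε n, ps ε (n + 1) - ps ε n = (if ε n then dseq n else 0) := by
      intro ε n
      rw [hpsdef]
      simp [Finset.sum_range_succ]
    have hps_stepA : ∀ ε n, ps ε (n + 1) - ps ε n ∈ Aset n := by
      intro ε n
      rw [hps_step]
      by_cases h : ε n <;> simp [h, hdmem n, Submodule.zero_mem]
    have hps_B : ∀ ε n, ps ε n ∈ B := by
      intro ε n
      apply Submodule.sum_mem
      intro k hk
      by_cases h : ε k <;> simp [h, hAB k (hdmem k), Submodule.zero_mem]
    have hps_tel : ∀ ε n m, n ≤ m → ps ε m - ps ε n ∈ Aset n := by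
      intro ε n m h
      induction m, h using Nat.le_induction with
      | base => simpa using Submodule.zero_mem (Aset n)
      | succ m hm ih =>
        have e : ps ε (m + 1) - ps ε n = (ps ε (m + 1) - ps ε m) + (ps ε m - ps ε n) := by abel
        rw [e]
        exact Submodule.add_mem _ (hAanti hm (hps_stepA ε m)) ih
    have hnoapp : ∃ ε : ℕ → Bool, ¬ ∃ b ∈ B, ∀ n, b - ps ε n ∈ Aset n := by
      by_contra hcon
      push_neg at hcon
      choose bf hbfB hbf using hcon
      choose af haf using fun ε => hbfB ε
      have hinj : Function.Injective af := by
        intro ε1 ε2 h12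
        by_contra hne12
        have hex : ∃ n, ε1 n ≠ ε2 n := by
          by_contra hall
          push_neg at hall
          exact hne12 (funext hall)
        have hn : ε1 (Nat.find hex) ≠ ε2 (Nat.find hex) := Nat.find_spec hex
        set n := Nat.find hex with hndef
        have hlt : ∀ k < n, ε1 k = ε2 k := fun k hk => not_not.mp (Nat.find_min hex hk)
        have hpseq : ps ε1 n = ps ε2 n := by
          apply Finset.sum_congr rfl
          intro k hk
          rw [hlt k (Finset.mem_range.mp hk)]
        have hb12 : bf ε1 = bf ε2 := by rw [← haf ε1, ← haf ε2, h12]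
        have hdiff : ps ε1 (n + 1) - ps ε2 (n + 1)
            = (if ε1 n then dseq n else 0) - (if ε2 n then dseq n else 0) := by
          rw [← hps_step ε1 n, ← hps_step ε2 n]
          rw [sub_sub_sub_comm]
          rw [hpseq]
          abel
        have hmem2 : ps ε1 (n + 1) - ps ε2 (n + 1) ∈ Aset (n + 1) := by
          have h1 := hbf ε1 (n + 1)
          have h2 := hbf ε2 (n + 1)
          rw [hb12] at h1
          have h3 := Submodule.sub_mem _ h2 h1
          simpa using h3
        rw [hdiff] at hmem2
        refine hdnot n ?_
        rcases Bool.eq_false_or_eq_true (ε1 n) with h1 | h1 <;>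
          rcases Bool.eq_false_or_eq_true (ε2 n) with h2 | h2
        · exact absurd (h1.trans h2.symm) hn
        · rw [h1, h2] at hmem2
          simp only [if_true, Bool.false_eq_true, if_false, sub_zero] at hmem2
          exact hmem2
        · rw [h1, h2] at hmem2
          simp only [if_true, Bool.false_eq_true, if_false, zero_sub] at hmem2
          simpa using Submodule.neg_mem _ hmem2
        · exact absurd (h1.trans h2.symm) hn
      have hcnt : Countable (ℕ → Bool) := Function.Injective.countable hinj
      exact auxUncount hcnt
    obtain ⟨ε0, hε0⟩ := hnoapp
    set aseq : ℕ → K ⊗[R] A := ps ε0 with haseqdef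
    set σf : ℕ → (K →ₗ[R] (K ⊗[R] A) × K) := fun n =>
      LinearMap.prod ((LinearMap.toSpanSingleton K (K ⊗[R] A) (aseq n)).restrictScalars R)
        LinearMap.id with hσdef
    have hσapp : ∀ n (x : K), σf n x = (x • aseq n, x) := fun n x => rfl
    set Xn : ℕ → Submodule R ((K ⊗[R] A) × K) := fun n =>
      Submodule.map (LinearMap.inl R (K ⊗[R] A) K) B ⊔ Submodule.map (σf n) (Jc n) with hXndef
    have hXmem : ∀ n (w : (K ⊗[R] A) × K), w ∈ Xn n ↔
        ∃ b ∈ B, ∃ x ∈ Jc n, w = (b + x • aseq n, x) := by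
      intro n w
      constructor
      · intro hw
        obtain ⟨u, hu, t, ht, rfl⟩ := Submodule.mem_sup.mp hw
        obtain ⟨b, hb, rfl⟩ := hu
        obtain ⟨x, hx, rfl⟩ := ht
        refine ⟨b, hb, x, hx, ?_⟩
        rw [hσapp]
        simp
      · rintro ⟨b, hb, x, hx, rfl⟩
        apply Submodule.mem_sup.mpr
        refine ⟨(b, 0), ⟨b, hb, rfl⟩, (x • aseq n, x), ⟨x, hx, (hσapp n x)⟩, ?_⟩
        simp
    have hXmono : Monotone Xn := by
      apply monotone_nat_of_le_succ
      intro n w hw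
      obtain ⟨b, hb, x, hx, rfl⟩ := (hXmem n w).mp hw
      refine (hXmem (n + 1) _).mpr
        ⟨b + x • (aseq n - aseq (n + 1)), ?_, x, hJmono (Nat.le_succ n) hx, ?_⟩
      · have h1 : x • (aseq (n + 1) - aseq n) ∈ B := (hps_stepA ε0 n) x hx
        have h2 : x • (aseq n - aseq (n + 1)) ∈ B := by
          have h3 := Submodule.neg_mem _ h1
          convert h3 using 1
          rw [smul_sub, smul_sub, neg_sub]
        exact Submodule.add_mem _ hb h2
      · have : b + x • (aseq n - aseq (n + 1)) + x • aseq (n + 1) = b + x • aseq n := by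
          rw [smul_sub]
          abel
        rw [this]
    set Xs : Submodule R ((K ⊗[R] A) × K) := ⨆ n, Xn n with hXsdef
    have hXsmem : ∀ w, w ∈ Xs ↔ ∃ n, w ∈ Xn n := fun w =>
      Submodule.mem_iSup_of_chain ⟨Xn, hXmono⟩ w
    have hf0mem : ∀ a : A, ((LinearMap.inl R (K ⊗[R] A) K) ∘ₗ ι) a ∈ Xs := by
      intro a
      refine (hXsmem _).mpr ⟨0, (hXmem 0 _).mpr ⟨ι a, ⟨a, rfl⟩, 0, Submodule.zero_mem _, ?_⟩⟩
      simp
    set f0 : A →ₗ[R] ↥Xs :=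
      LinearMap.codRestrict Xs ((LinearMap.inl R (K ⊗[R] A) K) ∘ₗ ι) hf0mem with hf0def
    have hsnd : ∀ w : ↥Xs, ((LinearMap.snd R (K ⊗[R] A) K) ∘ₗ Xs.subtype) w
        ∈ invPowersUnion R K I := by
      intro w
      obtain ⟨n, hn⟩ := (hXsmem w.1).mp w.2
      obtain ⟨b, hb, x, hx, he⟩ := (hXmem n _).mp hn
      show (w : (K ⊗[R] A) × K).2 ∈ invPowersUnion R K I
      rw [he]
      exact hJD n hx
    set g0 : ↥Xs →ₗ[R] ↥(invPowersUnion R K I) :=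
      LinearMap.codRestrict _ ((LinearMap.snd R (K ⊗[R] A) K) ∘ₗ Xs.subtype) hsnd with hg0def
    have hf0inj : Function.Injective f0 := by
      intro a1 a2 hq
      have h1 := congrArg (fun w : ↥Xs => (w : (K ⊗[R] A) × K).1) hq
      exact hιinj h1
    have hg0surj : Function.Surjective g0 := by
      intro ξ
      obtain ⟨n, hn⟩ := (Submodule.mem_iSup_of_chain ⟨Jc, hJmono⟩ ξ.1).mp (hDeq ▸ ξ.2)
      refine ⟨⟨σf n ξ.1, (hXsmem _).mpr ⟨n, (hXmem n _).mpr
        ⟨0, Submodule.zero_mem _, ξ.1, hn, by rw [hσapp]; simp⟩⟩⟩, ?_⟩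
      exact Subtype.ext rfl
    have hrk : LinearMap.range f0 = LinearMap.ker g0 := by
      apply le_antisymm
      · intro w hw
        obtain ⟨a, rfl⟩ := hw
        exact LinearMap.mem_ker.mpr (Subtype.ext rfl)
      · intro w hw
        have hw2 : (w : (K ⊗[R] A) × K).2 = 0 :=
          congrArg Subtype.val (LinearMap.mem_ker.mp hw)
        obtain ⟨n, hn⟩ := (hXsmem w.1).mp w.2
        obtain ⟨b, hb, x, hx, he⟩ := (hXmem n _).mp hn
        have hx0 : x = 0 := by
          rw [he] at hw2
          exact hw2
        obtain ⟨a, ha⟩ := hb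
        refine ⟨a, ?_⟩
        apply Subtype.ext
        show (ι a, (0 : K)) = (w : (K ⊗[R] A) × K)
        rw [he, hx0, zero_smul, add_zero, ha]
    obtain ⟨h, hh⟩ := hsplit (↥Xs) f0 g0 hf0inj hg0surj hrk
    set φ : ↥(invPowersUnion R K I) →ₗ[R] K ⊗[R] A :=
      ((LinearMap.fst R (K ⊗[R] A) K) ∘ₗ Xs.subtype) ∘ₗ h with hφdef
    have h1D : (1 : K) ∈ invPowersUnion R K I := hJD 0 (hJ1 0)
    set v : K ⊗[R] A := φ ⟨1, h1D⟩ with hvdef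
    have hφv : ∀ ξ : ↥(invPowersUnion R K I), φ ξ = (ξ : K) • v :=
      fun ξ => auxMul (invPowersUnion R K I) h1D φ ξ
    have hsnd_h : ∀ ξ : ↥(invPowersUnion R K I),
        ((h ξ : ↥Xs) : (K ⊗[R] A) × K).2 = (ξ : K) := by
      intro ξ
      exact congrArg Subtype.val (LinearMap.congr_fun hh ξ)
    have hkey : ∀ (x : K) (hx : x ∈ invPowersUnion R K I) (n : ℕ), x ∈ Jc n →
        ∃ m, n ≤ m ∧ x • v - x • aseq m ∈ B := by
      intro x hx n _
      obtain ⟨m0, hm0⟩ := (hXsmem (h ⟨x, hx⟩ : ↥Xs).1).mp (h ⟨x, hx⟩ : ↥Xs).2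
      have hm : ((h ⟨x, hx⟩ : ↥Xs) : (K ⊗[R] A) × K) ∈ Xn (max n m0) :=
        hXmono (le_max_right n m0) hm0
      obtain ⟨b, hb, x', hx', he⟩ := (hXmem (max n m0) _).mp hm
      have hx'e : x' = x := by
        have h5 := hsnd_h ⟨x, hx⟩
        rw [he] at h5
        exact h5
      refine ⟨max n m0, le_max_left n m0, ?_⟩
      have hφx : φ ⟨x, hx⟩ = b + x • aseq (max n m0) := by
        show ((h ⟨x, hx⟩ : ↥Xs) : (K ⊗[R] A) × K).1 = b + x • aseq (max n m0)
        rw [he, hx'e]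
      rw [show x • v = φ ⟨x, hx⟩ from (hφv ⟨x, hx⟩).symm, hφx]
      simpa using hb
    have hvB : v ∈ B := by
      obtain ⟨m, _, hmem⟩ := hkey 1 h1D 0 (hJ1 0)
      rw [one_smul, one_smul] at hmem
      have h6 := Submodule.add_mem _ hmem (hps_B ε0 m)
      simpa [haseqdef] using h6
    have happrox : ∀ n, v - aseq n ∈ Aset n := by
      intro n x hxn
      obtain ⟨m, hnm, hmem⟩ := hkey x (hJD n hxn) n hxn
      have htel : x • (aseq m - aseq n) ∈ B := (hps_tel ε0 n m hnm) x hxn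
      have h7 : x • (v - aseq n) = (x • v - x • aseq m) + x • (aseq m - aseq n) := by
        rw [smul_sub, smul_sub]
        abel
      rw [h7]
      exact Submodule.add_mem _ hmem htel
    exact hε0 ⟨v, hvB, happrox⟩
end

section
/- Let R be a Prüfer domain and A a countable flat R-module. Then the following are equivalent: (i) A is isomorphic to a direct sum ⨁_{n∈ℕ} B_n of flat R-modules each of finite rank; (ii) every finite subset of A is contained in a finite-rank direct summand of A, i.e., for every finite F ⊆ A there exist submodules D and D' of A with F ⊆ D, D ∩ D' = 0, D + D' = A, and D of finite rank. -/
open DirectSum TensorProduct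

section Aux

variable {R : Type} [CommRing R] [IsDomain R]
variable {A : Type} [AddCommGroup A] [Module R A]

lemma flat_smul_cancel [Module.Flat R A] {c : R} (hc : c ≠ 0) {x : A} (h : c • x = 0) :
    x = 0 := by
  have hf : Function.Injective (LinearMap.lsmul R R c) := by
    intro a b hab
    simp only [LinearMap.lsmul_apply, smul_eq_mul] at hab
    exact mul_left_cancel₀ hc hab
  have hinj :=
    Module.Flat.lTensor_preserves_injective_linearMap (M := A) (LinearMap.lsmul R R c) hf
  have h2 : (x ⊗ₜ[R] c : A ⊗[R] R) = 0 := by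
    apply (TensorProduct.rid R A).injective
    simpa [TensorProduct.rid_tmul] using h
  have h1 : (LinearMap.lTensor A (LinearMap.lsmul R R c)) (x ⊗ₜ[R] (1 : R)) = 0 := by
    rw [LinearMap.lTensor_tmul]
    simpa using h2
  have h3 : (x ⊗ₜ[R] (1 : R) : A ⊗[R] R) = 0 := hinj (by rw [h1, map_zero])
  have := congrArg (TensorProduct.rid R A) h3
  simpa [TensorProduct.rid_tmul] using this

lemma flat_of_isCompl [Module.Flat R A] {p q : Submodule R A} (h : IsCompl p q) :
    Module.Flat R p :=
  Module.Flat.of_retract (R := R) (M := A) (N := ↥p) p.subtype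
    (p.linearProjOfIsCompl q h) (Submodule.linearProjOfIsCompl_comp_subtype h)

variable (R) in
def suppSubmodule (β : ℕ → Type) [∀ n, AddCommGroup (β n)] [∀ n, Module R (β n)]
    (s : Set ℕ) : Submodule R (⨁ n, β n) where
  carrier := {x | ∀ n, n ∉ s → x n = 0}
  add_mem' := by
    intro a b ha hb n hn
    rw [DirectSum.add_apply, ha n hn, hb n hn, add_zero]
  zero_mem' := by
    intro n _
    exact DirectSum.zero_apply n
  smul_mem' := by
    intro c x hx n hn
    rw [DirectSum.smul_apply, hx n hn, smul_zero]

lemma mem_suppSubmodule {β : ℕ → Type} [∀ n, AddCommGroup (β n)] [∀ n, Module R (β n)]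
    {s : Set ℕ} {x : ⨁ n, β n} : x ∈ suppSubmodule R β s ↔ ∀ n, n ∉ s → x n = 0 := Iff.rfl

lemma rank_biSup_lt {M : Type} [AddCommGroup M] [Module R M] (p : ℕ → Submodule R M)
    (h : ∀ n, Module.rank R (p n) < Cardinal.aleph0) (N : ℕ) :
    Module.rank R ↥(⨆ n ∈ Finset.range N, p n) < Cardinal.aleph0 := by
  induction N with
  | zero =>
    have hbot : (⨆ n ∈ Finset.range 0, p n) = ⊥ := by simp
    rw [hbot, rank_bot]
    exact Cardinal.aleph0_pos
  | succ N ih =>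
    rw [Finset.range_add_one, Finset.iSup_insert]
    exact lt_of_le_of_lt (Submodule.rank_add_le_rank_add_rank _ _)
      (Cardinal.add_lt_aleph0 (h N) ih)

lemma rank_suppSubmodule_lt (β : ℕ → Type) [∀ n, AddCommGroup (β n)] [∀ n, Module R (β n)]
    (hr : ∀ n, Module.rank R (β n) < Cardinal.aleph0) (N : ℕ) :
    Module.rank R ↥(suppSubmodule R β {n | n < N}) < Cardinal.aleph0 := by
  classical
  have hb : suppSubmodule R β {n | n < N} ≤
      ⨆ n ∈ Finset.range N, LinearMap.range (DirectSum.lof R ℕ β n) := by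
    intro x hx
    rw [← DirectSum.sum_support_of (β := β) x]
    apply Submodule.sum_mem
    intro n hn
    have hnN : n < N := by
      by_contra hc
      have hx0 : x n = 0 := hx n (by simpa using hc)
      exact (DFinsupp.mem_support_iff.1 hn) hx0
    have hle : LinearMap.range (DirectSum.lof R ℕ β n) ≤
        ⨆ n ∈ Finset.range N, LinearMap.range (DirectSum.lof R ℕ β n) :=
      le_iSup₂ (f := fun n _ => LinearMap.range (DirectSum.lof R ℕ β n)) n (Finset.mem_range.2 hnN)
    exact hle ⟨x n, DirectSum.lof_eq_of R ℕ β n (x n)⟩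
  refine lt_of_le_of_lt (Submodule.rank_mono hb) (rank_biSup_lt _ ?_ N)
  intro n
  have hinj : Function.Injective (DirectSum.lof R ℕ β n) := fun a b hab =>
    DirectSum.of_injective n (by rwa [← DirectSum.lof_eq_of R, ← DirectSum.lof_eq_of R])
  rw [← (LinearEquiv.ofInjective _ hinj).rank_eq]
  exact hr n

lemma exists_summand_step [Module.Flat R A]
    (hF : ∀ F : Finset A, ∃ D D' : Submodule R A,
        (↑F : Set A) ⊆ (D : Set A) ∧ D ⊓ D' = ⊥ ∧ D ⊔ D' = ⊤ ∧
        Module.rank R ↥D < Cardinal.aleph0)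
    (D : Submodule R A) (hD : Module.rank R ↥D < Cardinal.aleph0) (a : A) :
    ∃ E E' : Submodule R A, D ≤ E ∧ a ∈ E ∧ IsCompl E E' ∧
      Module.rank R ↥E < Cardinal.aleph0 := by
  classical
  obtain ⟨k, hk⟩ := Cardinal.lt_aleph0.1 hD
  set P : ℕ → Prop := fun m => ∃ v : Fin m → A, (∀ i, v i ∈ D) ∧ LinearIndependent R v with hP
  have hP0 : P 0 := ⟨fun i => i.elim0, fun i => i.elim0, linearIndependent_empty_type⟩
  have hbound : ∀ m, P m → m ≤ k := by
    rintro m ⟨v, hvD, hvi⟩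
    have hvi' : LinearIndependent R (fun i => (⟨v i, hvD i⟩ : D)) :=
      LinearIndependent.of_comp D.subtype (by simpa [Function.comp_def] using hvi)
    have hle := hvi'.cardinal_le_rank
    rw [hk] at hle
    simpa using hle
  set n := Nat.findGreatest P k with hn
  have hPn : P n := Nat.findGreatest_spec (Nat.zero_le k) hP0
  have hmax : ¬ P (n + 1) := fun h =>
    Nat.findGreatest_is_greatest (Nat.lt_succ_self _) (hbound _ h) h
  obtain ⟨v, hvD, hvi⟩ := hPn
  obtain ⟨E, E', hFE, hinf, hsup, hrk⟩ := hF (insert a (Finset.image v Finset.univ))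
  have haE : a ∈ E := hFE (by simp)
  have hvE : ∀ i, v i ∈ E := fun i =>
    hFE (Finset.mem_coe.2 (Finset.mem_insert_of_mem
      (Finset.mem_image_of_mem v (Finset.mem_univ i))))
  have key : ∀ d ∈ D, ∃ c : R, c ≠ 0 ∧ c • d ∈ E := by
    intro d hd
    have hw : ¬ LinearIndependent R (Fin.snoc v d : Fin (n + 1) → A) := by
      intro h
      refine hmax ⟨Fin.snoc v d, fun i => ?_, h⟩
      refine Fin.lastCases ?_ (fun j => ?_) i
      · simpa using hd
      · simpa using hvD j
    rw [Fintype.not_linearIndependent_iff] at hw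
    obtain ⟨g, hg, i, hgi⟩ := hw
    rw [Fin.sum_univ_castSucc] at hg
    simp only [Fin.snoc_castSucc, Fin.snoc_last] at hg
    have hglast : g (Fin.last n) ≠ 0 := by
      intro h0
      rw [h0, zero_smul, add_zero] at hg
      have hz := Fintype.linearIndependent_iff.1 hvi (fun j => g j.castSucc) hg
      refine hgi ?_
      refine Fin.lastCases h0 (fun j => hz j) i
    refine ⟨g (Fin.last n), hglast, ?_⟩
    have hrel : g (Fin.last n) • d = -∑ j : Fin n, g j.castSucc • v j :=
      eq_neg_of_add_eq_zero_right hg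
    rw [hrel]
    exact Submodule.neg_mem _ (Submodule.sum_mem _ fun j _ => Submodule.smul_mem _ _ (hvE j))
  have hDE : D ≤ E := by
    intro d hd
    obtain ⟨c, hc, hcd⟩ := key d hd
    have hdm : d ∈ E ⊔ E' := by rw [hsup]; trivial
    obtain ⟨e, he, e', he', rfl⟩ := Submodule.mem_sup.1 hdm
    have h1 : c • e' ∈ E := by
      have := E.sub_mem hcd (E.smul_mem c he)
      simpa [smul_add] using this
    have h2 : c • e' ∈ E' := E'.smul_mem c he'
    have h3 : c • e' = 0 := by
      have hmem : c • e' ∈ E ⊓ E' := ⟨h1, h2⟩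
      rwa [hinf, Submodule.mem_bot] at hmem
    have he0 : e' = 0 := flat_smul_cancel hc h3
    rw [he0, add_zero]
    exact he
  exact ⟨E, E', hDE, haE, ⟨disjoint_iff.2 hinf, codisjoint_iff.2 hsup⟩, hrk⟩

lemma exists_summand_step' [Module.Flat R A]
    (hF : ∀ F : Finset A, ∃ D D' : Submodule R A,
        (↑F : Set A) ⊆ (D : Set A) ∧ D ⊓ D' = ⊥ ∧ D ⊔ D' = ⊤ ∧
        Module.rank R ↥D < Cardinal.aleph0)
    {D₀ E₀ : Submodule R A} (hc : IsCompl D₀ E₀)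
    (hd : Module.rank R ↥D₀ < Cardinal.aleph0) (a : A) :
    ∃ D E : Submodule R A, D₀ ≤ D ∧ E ≤ E₀ ∧ a ∈ D ∧ IsCompl D E ∧
      Module.rank R ↥D < Cardinal.aleph0 := by
  obtain ⟨D, Q, hD₀D, haD, hcDQ, hrk⟩ := exists_summand_step hF D₀ hd a
  set π : A →ₗ[R] A := E₀.subtype ∘ₗ E₀.linearProjOfIsCompl D₀ hc.symm with hπ
  have hπmem : ∀ x, π x ∈ E₀ := fun x => (E₀.linearProjOfIsCompl D₀ hc.symm x).2
  have hsub : ∀ x, x - π x ∈ D₀ := by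
    intro x
    have h : (D₀.linearProjOfIsCompl E₀ hc x : A) + (E₀.linearProjOfIsCompl D₀ hc.symm x : A) = x :=
      Submodule.projection_add_projection_eq_self hc x
    have heq : x - π x = (D₀.linearProjOfIsCompl E₀ hc x : A) := by
      conv_lhs => rw [← h]
      simp [hπ, Submodule.linearProjOfIsCompl, Submodule.projection_apply_of_mem_left,
        Submodule.projection_apply_mem, Submodule.projection_apply_eq_zero_iff]
    rw [heq]
    exact (D₀.linearProjOfIsCompl E₀ hc x).2
  refine ⟨D, Submodule.map π Q, hD₀D, ?_, haD, ⟨?_, ?_⟩, hrk⟩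
  · intro x hx
    obtain ⟨q, _, rfl⟩ := Submodule.mem_map.1 hx
    exact hπmem q
  · rw [disjoint_iff, eq_bot_iff]
    rintro x ⟨hxD, hxQ⟩
    obtain ⟨q, hq, rfl⟩ := Submodule.mem_map.1 hxQ
    have hqD : q ∈ D := by
      have hq' : q = (q - π q) + π q := by abel
      rw [hq']
      exact D.add_mem (hD₀D (hsub q)) hxD
    have hq0 : q = 0 := (Submodule.mem_bot R).1 (hcDQ.disjoint.le_bot ⟨hqD, hq⟩)
    simp [hq0]
  · rw [codisjoint_iff, eq_top_iff]
    intro x _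
    have hx : x ∈ D ⊔ Q := by rw [hcDQ.codisjoint.eq_top]; trivial
    obtain ⟨p, hp, q, hq, rfl⟩ := Submodule.mem_sup.1 hx
    refine Submodule.mem_sup.2 ⟨p + (q - π q), D.add_mem hp (hD₀D (hsub q)), π q,
      Submodule.mem_map_of_mem hq, by abel⟩

end Aux

/-- Let `R` be a Prüfer domain and `A` a countable flat `R`-module. Then `A`
is isomorphic to a direct sum `⨁_{n∈ℕ} B_n` of finite-rank flat modules if and only if every
finite subset of `A` is contained in a finite-rank direct summand of `A`. -/
theorem stmt11 (R : Type) [CommRing R] [IsDomain R]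
    (hPrufer : ∀ I : Ideal R, I.FG → Module.Projective R I)
    (A : Type) [AddCommGroup A] [Module R A] [Countable A] [Module.Flat R A] :
    (∃ B : ℕ → ModuleCat.{0} R,
        (∀ n, Module.Flat R (B n)) ∧ (∀ n, Module.rank R (B n) < Cardinal.aleph0) ∧
        Nonempty (A ≃ₗ[R] ⨁ n : ℕ, B n)) ↔
    (∀ F : Finset A, ∃ D D' : Submodule R A,
        (↑F : Set A) ⊆ (D : Set A) ∧ D ⊓ D' = ⊥ ∧ D ⊔ D' = ⊤ ∧
        Module.rank R ↥D < Cardinal.aleph0) := by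
  constructor
  · -- forward direction
    rintro ⟨B, hBflat, hBrank, ⟨e⟩⟩ F
    classical
    set β : ℕ → Type := fun n => ↥(B n) with hβ
    set N : ℕ := (F.sup fun a => (e a).support.sup id) + 1 with hN
    have hFN : ∀ a ∈ F, ∀ n, N ≤ n → e a n = 0 := by
      intro a ha n hn
      by_contra h
      have hmem : n ∈ (e a).support := DFinsupp.mem_support_iff.2 h
      have h1 : n ≤ F.sup fun a => (e a).support.sup id :=
        le_trans (Finset.le_sup (f := id) hmem) (Finset.le_sup (f := fun a => (e a).support.sup id) ha)
      omega
    set T1 : Submodule R (⨁ n, β n) := suppSubmodule R β {n | n < N} with hT1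
    set T2 : Submodule R (⨁ n, β n) := suppSubmodule R β {n | N ≤ n} with hT2
    have hT1T2inf : T1 ⊓ T2 = ⊥ := by
      rw [eq_bot_iff]
      rintro x ⟨hx1, hx2⟩
      rw [Submodule.mem_bot]
      refine DFunLike.ext x 0 fun n => ?_
      rcases lt_or_ge n N with hlt | hge
      · rw [hx2 n (by simpa using Nat.not_le.2 hlt)]
        exact (DirectSum.zero_apply (β := β) n).symm
      · rw [hx1 n (by simpa using Nat.not_lt.2 hge)]
        exact (DirectSum.zero_apply (β := β) n).symm
    have hT1T2sup : T1 ⊔ T2 = ⊤ := by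
      rw [eq_top_iff]
      intro x _
      have hsplit := DirectSum.sum_support_of (β := β) x
      rw [← hsplit, ← Finset.sum_filter_add_sum_filter_not x.support (fun n => n < N)]
      refine Submodule.add_mem _ (Submodule.mem_sup_left (Submodule.sum_mem _ ?_))
        (Submodule.mem_sup_right (Submodule.sum_mem _ ?_))
      · intro n hn
        rw [Finset.mem_filter] at hn
        intro m hm
        exact DirectSum.of_eq_of_ne n m _ (by intro h; subst h; exact hm (by simpa using hn.2))
      · intro n hn
        rw [Finset.mem_filter] at hn
        intro m hm
        exact DirectSum.of_eq_of_ne n m _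
          (by intro h; subst h; exact hm (by simpa using Nat.not_lt.1 hn.2))
    refine ⟨Submodule.map (e.symm : (⨁ n, β n) →ₗ[R] A) T1,
      Submodule.map (e.symm : (⨁ n, β n) →ₗ[R] A) T2, ?_, ?_, ?_, ?_⟩
    · intro a ha
      exact ⟨e a, fun n hn => hFN a ha n (by simpa using hn), e.symm_apply_apply a⟩
    · rw [← Submodule.map_inf (e.symm : (⨁ n, β n) →ₗ[R] A) e.symm.injective, hT1T2inf,
        Submodule.map_bot]
    · rw [← Submodule.map_sup, hT1T2sup, Submodule.map_top]
      exact LinearMap.range_eq_top.2 e.symm.surjective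
    · rw [← (e.symm.submoduleMap T1).rank_eq]
      exact rank_suppSubmodule_lt β hBrank N
  · -- backward direction
    intro hFin
    obtain ⟨f, hf⟩ := exists_surjective_nat A
    obtain ⟨D0, E0, _, hfD0, hc0, hr0⟩ := exists_summand_step hFin ⊥
      (by rw [rank_bot]; exact Cardinal.aleph0_pos) (f 0)
    have exStep : ∀ (n : ℕ) (p : Submodule R A × Submodule R A),
        ∃ q : Submodule R A × Submodule R A,
        (IsCompl p.1 p.2 ∧ Module.rank R ↥p.1 < Cardinal.aleph0) →
        (IsCompl q.1 q.2 ∧ Module.rank R ↥q.1 < Cardinal.aleph0 ∧ p.1 ≤ q.1 ∧ q.2 ≤ p.2 ∧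
          f n ∈ q.1) := by
      intro n p
      by_cases hp : IsCompl p.1 p.2 ∧ Module.rank R ↥p.1 < Cardinal.aleph0
      · obtain ⟨Dn, En, h1, h2, h3, h4, h5⟩ := exists_summand_step' hFin hp.1 hp.2 (f n)
        exact ⟨(Dn, En), fun _ => ⟨h4, h5, h1, h2, h3⟩⟩
      · exact ⟨p, fun h => absurd h hp⟩
    choose step hstep using exStep
    set g : ℕ → Submodule R A × Submodule R A :=
      fun n => Nat.rec (D0, E0) (fun n p => step (n + 1) p) n with hg
    set D : ℕ → Submodule R A := fun n => (g n).1 with hD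
    set E : ℕ → Submodule R A := fun n => (g n).2 with hE
    have hgood : ∀ n, IsCompl (D n) (E n) ∧ Module.rank R ↥(D n) < Cardinal.aleph0 := by
      intro n
      induction n with
      | zero => exact ⟨hc0, hr0⟩
      | succ n ih =>
        have h := hstep (n + 1) (g n) ih
        exact ⟨h.1, h.2.1⟩
    have hmono : ∀ n, D n ≤ D (n + 1) := fun n => (hstep (n + 1) (g n) (hgood n)).2.2.1
    have hanti : ∀ n, E (n + 1) ≤ E n := fun n => (hstep (n + 1) (g n) (hgood n)).2.2.2.1
    have hfmem : ∀ n, f n ∈ D n := by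
      intro n
      cases n with
      | zero => exact hfD0
      | succ n => exact (hstep (n + 1) (g n) (hgood n)).2.2.2.2
    have hDmono : Monotone D := monotone_nat_of_le_succ hmono
    have hEanti : Antitone E := antitone_nat_of_succ_le hanti
    set C : ℕ → Submodule R A := fun n => Nat.casesOn n (D 0) (fun m => D (m + 1) ⊓ E m) with hC
    have hC0 : C 0 = D 0 := rfl
    have hCs : ∀ m, C (m + 1) = D (m + 1) ⊓ E m := fun m => rfl
    have hCD : ∀ n, C n ≤ D n := by
      intro n
      cases n with
      | zero => exact le_rfl
      | succ m => exact inf_le_left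
    have hDsup : ∀ m, D m ⊔ C (m + 1) = D (m + 1) := by
      intro m
      rw [hCs, inf_comm, ← sup_inf_assoc_of_le _ (hmono m),
        (hgood m).1.codisjoint.eq_top, top_inf_eq]
    have hsupC : ∀ n, D n ≤ ⨆ k, C k := by
      intro n
      induction n with
      | zero => exact hC0 ▸ le_iSup C 0
      | succ m ih =>
        rw [← hDsup m]
        exact sup_le ih (le_iSup C (m + 1))
    have hCtop : ⨆ k, C k = ⊤ := by
      rw [eq_top_iff]
      intro a _
      obtain ⟨n, rfl⟩ := hf a
      exact hsupC n (hfmem n)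
    have hdis : ∀ m, Disjoint (C (m + 1)) (D m ⊔ E (m + 1)) := by
      intro m
      rw [disjoint_iff, eq_bot_iff]
      rintro x ⟨hx1, hx2⟩
      have hxD : x ∈ D (m + 1) := (hCD (m + 1)) hx1
      have hxE : x ∈ E m := ((hCs m) ▸ hx1 : x ∈ D (m + 1) ⊓ E m).2
      have hxDm : x ∈ D m := by
        have h1 : x ∈ (D m ⊔ E (m + 1)) ⊓ D (m + 1) := ⟨hx2, hxD⟩
        rw [sup_inf_assoc_of_le _ (hmono m), inf_comm (E (m + 1)) (D (m + 1)),
          (hgood (m + 1)).1.disjoint.eq_bot, sup_bot_eq] at h1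
        exact h1
      have hbot : x ∈ D m ⊓ E m := ⟨hxDm, hxE⟩
      rw [(hgood m).1.disjoint.eq_bot] at hbot
      exact hbot
    have hcompl : ∀ n, ∃ Q, IsCompl (C n) Q := by
      intro n
      cases n with
      | zero => exact ⟨E 0, hC0 ▸ (hgood 0).1⟩
      | succ m =>
        refine ⟨D m ⊔ E (m + 1), ⟨hdis m, ?_⟩⟩
        rw [codisjoint_iff, ← sup_assoc, sup_comm (C (m + 1)) (D m), hDsup m,
          (hgood (m + 1)).1.codisjoint.eq_top]
    have hind : iSupIndep C := by
      intro i
      have hb : (⨆ (j) (_ : j ≠ i), C j) ≤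
          (Nat.casesOn i (E 0) (fun m => D m ⊔ E (m + 1)) : Submodule R A) := by
        refine iSup_le fun j => iSup_le fun hj => ?_
        cases i with
        | zero =>
          cases j with
          | zero => exact absurd rfl hj
          | succ m => exact le_trans inf_le_right (hEanti (Nat.zero_le m))
        | succ m =>
          rcases lt_or_gt_of_ne hj with hlt | hgt
          · exact le_trans (le_trans (hCD j) (hDmono (Nat.lt_succ_iff.1 hlt))) le_sup_left
          · cases j with
            | zero => exact absurd hgt (by omega)
            | succ l =>
              have hml : m + 1 ≤ l := by omega
              exact le_trans (le_trans inf_le_right (hEanti hml)) le_sup_right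
      cases i with
      | zero => exact Disjoint.mono_right hb (hC0 ▸ (hgood 0).1.disjoint)
      | succ m => exact Disjoint.mono_right hb (hdis m)
    have hint : DirectSum.IsInternal C :=
      DirectSum.isInternal_submodule_of_iSupIndep_of_iSup_eq_top hind hCtop
    refine ⟨fun n => ModuleCat.of R ↥(C n), ?_, ?_, ?_⟩
    · intro n
      obtain ⟨Q, hQ⟩ := hcompl n
      exact flat_of_isCompl hQ
    · intro n
      exact lt_of_le_of_lt (Submodule.rank_mono (hCD n)) (hgood n).2
    · exact ⟨(LinearEquiv.ofBijective (DirectSum.coeLinearMap C) hint).symm⟩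
end

section
/- Let R be a countable Prüfer domain and C a countable flat R-module. Then there exists a short exact sequence 0 → A → B →^g C → 0 of R-modules such that A and B are each isomorphic to a direct sum of countably many finite-rank flat R-modules, and moreover every R-linear map φ : X → C from a finite-rank flat R-module X lifts along g: there exists an R-linear map ψ : X → B with g ∘ ψ = φ. -/
open DirectSum



section SatAux

variable {R : Type} [CommRing R] [IsDomain R] {C : Type} [AddCommGroup C] [Module R C]

/-- The saturation of a submodule of a module over a domain. -/
def mySat (S : Submodule R C) : Submodule R C where
  carrier := {c | ∃ r : R, r ≠ 0 ∧ r • c ∈ S}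
  add_mem' := by
    rintro a b ⟨r, hr, hra⟩ ⟨t, ht, htb⟩
    refine ⟨r * t, mul_ne_zero hr ht, ?_⟩
    rw [smul_add]
    exact S.add_mem (by rw [mul_comm, mul_smul]; exact S.smul_mem t hra)
      (by rw [mul_smul]; exact S.smul_mem r htb)
  zero_mem' := ⟨1, one_ne_zero, by simp⟩
  smul_mem' := by
    rintro c a ⟨r, hr, hra⟩
    exact ⟨r, hr, by rw [smul_comm]; exact S.smul_mem c hra⟩

lemma mem_mySat {S : Submodule R C} {c : C} :
    c ∈ mySat S ↔ ∃ r : R, r ≠ 0 ∧ r • c ∈ S := Iff.rfl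

lemma mySat_mono {S T : Submodule R C} (h : S ≤ T) : mySat S ≤ mySat T := by
  rintro c ⟨r, hr, hrc⟩; exact ⟨r, hr, h hrc⟩

lemma le_mySat (S : Submodule R C) : S ≤ mySat S := fun c hc => ⟨1, one_ne_zero, by simpa⟩

lemma mySat_saturated {S : Submodule R C} {r : R} (hr : r ≠ 0) {c : C}
    (h : r • c ∈ mySat S) : c ∈ mySat S := by
  obtain ⟨t, ht, htc⟩ := h
  exact ⟨t * r, mul_ne_zero ht hr, by rwa [mul_smul]⟩

/-- A torsion-free module over a "Prüfer" domain is flat. -/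
theorem flat_of_torsionfree {R : Type} [CommRing R] [IsDomain R]
    (hP : ∀ I : Ideal R, I.FG → Module.Projective R I)
    {M : Type} [AddCommGroup M] [Module R M]
    (htf : ∀ r : R, r ≠ 0 → IsSMulRegular M r) : Module.Flat R M := by
  classical
  rw [Module.Flat.iff_rTensor_injective]
  intro I hI
  obtain ⟨s, hs⟩ := Module.projective_def.mp (hP I hI)
  rw [← LinearMap.ker_eq_bot, eq_bot_iff]
  intro x hx
  rw [LinearMap.mem_ker] at hx
  obtain ⟨T, rfl⟩ := TensorProduct.exists_finset x
  rw [Submodule.mem_bot]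
  have hsum : ∑ p ∈ T, (p.1 : R) • p.2 = 0 := by
    have := congrArg (TensorProduct.lid R M) hx
    simpa [map_sum] using this
  by_cases hz : ∀ y : I, y = 0
  · exact Finset.sum_eq_zero fun p _ => by rw [hz p.1, TensorProduct.zero_tmul]
  push_neg at hz
  obtain ⟨c, hc⟩ := hz
  have hcR : (c : R) ≠ 0 := fun h => hc (Subtype.ext h)
  have key : ∀ (y z : I) (q : I), (y : R) * (s z) q = (z : R) * (s y) q := by
    intro y z q
    have h1 : (y : R) • z = (z : R) • y := Subtype.ext (by simp [mul_comm])
    have h2 := congrArg (fun w => (s w) q) h1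
    simpa [map_smul, Finsupp.smul_apply, smul_eq_mul] using h2
  set F : Finset I := T.sup (fun p => (s p.1).support) with hF
  have hrep : ∀ p ∈ T, (p.1 : I) = ∑ q ∈ F, ((s p.1) q) • q := by
    intro p hp
    have h1 := hs p.1
    rw [Finsupp.linearCombination_apply] at h1
    exact h1.symm.trans <| Finsupp.sum_of_support_subset (s p.1) (Finset.le_sup (f := fun p => (s p.1).support) hp) (fun i a => a • id i)
      (fun i _ => zero_smul R (id i))
  have hinner : ∀ q ∈ F, ∑ p ∈ T, ((s p.1) q) • p.2 = 0 := by
    intro q _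
    apply htf (c : R) hcR
    show (c : R) • _ = (c : R) • (0 : M)
    rw [smul_zero, Finset.smul_sum]
    calc ∑ p ∈ T, (c : R) • (((s p.1) q) • p.2)
        = ∑ p ∈ T, ((s c) q) • ((p.1 : R) • p.2) := by
          refine Finset.sum_congr rfl fun p _ => ?_
          rw [smul_smul, smul_smul, key c p.1 q, mul_comm]
      _ = ((s c) q) • ∑ p ∈ T, (p.1 : R) • p.2 := by rw [Finset.smul_sum]
      _ = 0 := by rw [hsum, smul_zero]
  calc ∑ p ∈ T, p.1 ⊗ₜ[R] p.2
      = ∑ p ∈ T, ∑ q ∈ F, (((s p.1) q) • q) ⊗ₜ[R] p.2 := by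
        refine Finset.sum_congr rfl fun p hp => ?_
        rw [← TensorProduct.sum_tmul, ← hrep p hp]
    _ = ∑ q ∈ F, ∑ p ∈ T, q ⊗ₜ[R] (((s p.1) q) • p.2) := by
        rw [Finset.sum_comm]
        exact Finset.sum_congr rfl fun q _ => Finset.sum_congr rfl fun p _ =>
          TensorProduct.smul_tmul _ _ _
    _ = ∑ q ∈ F, q ⊗ₜ[R] (∑ p ∈ T, ((s p.1) q) • p.2) := by
        exact Finset.sum_congr rfl fun q _ => (TensorProduct.tmul_sum _ _ _).symm
    _ = 0 := Finset.sum_eq_zero fun q hq => by rw [hinner q hq, TensorProduct.tmul_zero]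

lemma li_smul {ι : Type} {v : ι → C} (hv : LinearIndependent R v) (r : ι → R)
    (hr : ∀ i, r i ≠ 0) : LinearIndependent R fun i => r i • v i := by
  rw [linearIndependent_iff'] at hv ⊢
  intro t g hg i hi
  have h1 : ∑ i ∈ t, (g i * r i) • v i = 0 := by
    rw [← hg]; exact Finset.sum_congr rfl fun i _ => (smul_smul _ _ _).symm
  have := hv t (fun i => g i * r i) h1 i hi
  exact (mul_eq_zero.mp this).resolve_right (hr i)

end SatAux

section DDAux

variable {R : Type} [CommRing R] [IsDomain R] {C : Type} [AddCommGroup C] [Module R C]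

/-- The `n`-th member of the filtration: the saturation of the span of the first `n`
elements of the enumeration `e`. -/
def DD (e : ℕ → C) (n : ℕ) : Submodule R C :=
  mySat (Submodule.span R (Set.range fun i : Fin n => e i))

lemma DD_mono (e : ℕ → C) : Monotone (DD (R := R) e) := by
  intro m n h
  apply mySat_mono
  apply Submodule.span_mono
  rintro _ ⟨i, rfl⟩
  exact ⟨⟨i.1, lt_of_lt_of_le i.2 h⟩, rfl⟩

lemma mem_DD (e : ℕ → C) (k : ℕ) : e k ∈ DD (R := R) e (k + 1) :=
  le_mySat _ (Submodule.subset_span ⟨⟨k, Nat.lt_succ_self k⟩, rfl⟩)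

lemma DD_saturated {e : ℕ → C} {n : ℕ} {r : R} (hr : r ≠ 0) {c : C}
    (h : r • c ∈ DD (R := R) e n) : c ∈ DD (R := R) e n :=
  mySat_saturated hr h

lemma rank_DD_lt (e : ℕ → C) (htf : ∀ r : R, r ≠ 0 → IsSMulRegular C r) (n : ℕ) :
    Module.rank R (DD (R := R) e n) < Cardinal.aleph0 := by
  classical
  have hle : Module.rank R (DD (R := R) e n) ≤ (n : Cardinal) := by
    apply rank_le
    intro t ht
    choose r hr hrS using fun i : t => (i : DD (R := R) e n).2
    have hbase : LinearIndependent R (fun i : t => ((i : DD (R := R) e n) : C)) :=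
      ht.map' (DD (R := R) e n).subtype (Submodule.ker_subtype _)
    have hsc : LinearIndependent R (fun i : t => r i • ((i : DD (R := R) e n) : C)) :=
      li_smul hbase r hr
    set S : Submodule R C := Submodule.span R (Set.range fun i : Fin n => e i) with hS
    have hres : LinearIndependent R
        (fun i : t => (⟨r i • ((i : DD (R := R) e n) : C), hrS i⟩ : S)) := by
      apply LinearIndependent.of_comp S.subtype
      exact hsc
    have hcard : Cardinal.mk t ≤ Module.rank R S := hres.cardinal_le_rank
    have hSn : Module.rank R S ≤ (n : Cardinal) := by
      refine (rank_span_le _).trans ?_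
      refine le_trans Cardinal.mk_range_le ?_
      simp [Cardinal.mk_fin]
    have := hcard.trans hSn
    rw [Cardinal.mk_coe_finset] at this
    exact_mod_cast this
  exact hle.trans_lt (Cardinal.nat_lt_aleph0 n)

lemma flat_DD (e : ℕ → C) (hP : ∀ I : Ideal R, I.FG → Module.Projective R I)
    (htf : ∀ r : R, r ≠ 0 → IsSMulRegular C r) (n : ℕ) :
    Module.Flat R (DD (R := R) e n) :=
  flat_of_torsionfree hP fun r hr => IsSMulRegular.submodule _ r (htf r hr)

end DDAux

section Telescope

variable {R : Type} [CommRing R] {C : Type} [AddCommGroup C] [Module R C]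
variable (D : ℕ → Submodule R C) (hmono : Monotone D)

/-- The sum-of-inclusions map `⨁ₙ Dₙ → C`. -/
def gmap : (⨁ n, ↥(D n)) →ₗ[R] C := toModule R ℕ C fun n => (D n).subtype

/-- The telescope map `⨁ₙ Dₙ → ⨁ₙ Dₙ`. -/
def fmap : (⨁ n, ↥(D n)) →ₗ[R] ⨁ n, ↥(D n) :=
  toModule R ℕ _ fun n =>
    lof R ℕ (fun k => ↥(D k)) n -
      (lof R ℕ (fun k => ↥(D k)) (n + 1)) ∘ₗ Submodule.inclusion (hmono (Nat.le_succ n))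

lemma gmap_of (n : ℕ) (x : ↥(D n)) :
    gmap D (of (fun k => ↥(D k)) n x) = (x : C) := by
  unfold gmap
  exact toModule_lof (N := C) (φ := fun k => (D k).subtype) R n x

lemma fmap_of (n : ℕ) (x : ↥(D n)) :
    fmap D hmono (of (fun k => ↥(D k)) n x) =
      of (fun k => ↥(D k)) n x -
        of (fun k => ↥(D k)) (n + 1) (Submodule.inclusion (hmono (Nat.le_succ n)) x) := by
  unfold fmap
  rw [show (of (fun k => ↥(D k)) n x : ⨁ k, ↥(D k)) = lof R ℕ (fun k => ↥(D k)) n x from rfl,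
    toModule_lof]
  rfl

lemma gmap_fmap : (gmap D) ∘ₗ (fmap D hmono) = 0 := by
  apply linearMap_ext
  intro n
  refine LinearMap.ext fun x => ?_
  simp only [LinearMap.comp_apply, LinearMap.zero_comp, LinearMap.zero_apply, lof_eq_of]
  rw [fmap_of, map_sub, gmap_of, gmap_of, Submodule.coe_inclusion, sub_self]

lemma component_fmap_zero (a : ⨁ n, ↥(D n)) :
    component R ℕ (fun k => ↥(D k)) 0 (fmap D hmono a) =
      component R ℕ (fun k => ↥(D k)) 0 a := by
  classical
  have h : (component R ℕ (fun k => ↥(D k)) 0) ∘ₗ (fmap D hmono) =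
      component R ℕ (fun k => ↥(D k)) 0 := by
    apply linearMap_ext
    intro n
    refine LinearMap.ext fun x => ?_
    simp only [LinearMap.comp_apply, lof_eq_of]
    rw [fmap_of, map_sub]
    simp only [← lof_eq_of R]
    rcases eq_or_ne n 0 with h | h
    · subst h; simp [component.of]
    · simp [component.of, h]
  exact DFunLike.congr_fun h a

lemma component_fmap_succ (k : ℕ) (a : ⨁ n, ↥(D n)) :
    component R ℕ (fun n => ↥(D n)) (k + 1) (fmap D hmono a) =
      component R ℕ (fun n => ↥(D n)) (k + 1) a -
        Submodule.inclusion (hmono (Nat.le_succ k))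
          (component R ℕ (fun n => ↥(D n)) k a) := by
  classical
  have h : (component R ℕ (fun n => ↥(D n)) (k + 1)) ∘ₗ (fmap D hmono) =
      component R ℕ (fun n => ↥(D n)) (k + 1) -
        (Submodule.inclusion (hmono (Nat.le_succ k))) ∘ₗ
          component R ℕ (fun n => ↥(D n)) k := by
    apply linearMap_ext
    intro n
    refine LinearMap.ext fun x => ?_
    simp only [LinearMap.comp_apply, LinearMap.sub_apply, lof_eq_of]
    rw [fmap_of, map_sub]
    simp only [← lof_eq_of R]
    congr 1
    rcases eq_or_ne n k with h1 | h1
    · subst h1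
      simp [component.of]
    · simp [component.of, h1]
  exact DFunLike.congr_fun h a

end Telescope

section Telescope2

variable {R : Type} [CommRing R] {C : Type} [AddCommGroup C] [Module R C]
variable (D : ℕ → Submodule R C) (hmono : Monotone D)

lemma fmap_injective : Function.Injective (fmap D hmono) := by
  rw [← LinearMap.ker_eq_bot, eq_bot_iff]
  intro a ha
  rw [LinearMap.mem_ker] at ha
  rw [Submodule.mem_bot]
  have hz : ∀ k, component R ℕ (fun n => ↥(D n)) k a = 0 := by
    intro k
    induction k with
    | zero =>
      have h0 := component_fmap_zero D hmono a
      rw [ha, map_zero] at h0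
      exact h0.symm
    | succ k ih =>
      have h1 := component_fmap_succ D hmono k a
      rw [ha, map_zero, ih, map_zero, sub_zero] at h1
      exact h1.symm
  exact DirectSum.ext_component R fun i => by rw [hz, map_zero]

lemma gmap_surjective (hcov : ∀ c : C, ∃ n, c ∈ D n) : Function.Surjective (gmap D) := by
  intro c
  obtain ⟨n, hc⟩ := hcov c
  exact ⟨of (fun k => ↥(D k)) n ⟨c, hc⟩, gmap_of D n ⟨c, hc⟩⟩

lemma range_fmap : LinearMap.range (fmap D hmono) = LinearMap.ker (gmap D) := by
  classical
  apply le_antisymm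
  · rintro _ ⟨a, rfl⟩
    rw [LinearMap.mem_ker, ← LinearMap.comp_apply, gmap_fmap, LinearMap.zero_apply]
  · intro b hb
    rw [LinearMap.mem_ker] at hb
    set N : ℕ := (DFinsupp.support b).sup id + 1 with hNdef
    have hbz : ∀ k, N ≤ k → component R ℕ (fun n => ↥(D n)) k b = 0 := by
      intro k hk
      by_contra hne
      have hmem : k ∈ DFinsupp.support b := DFinsupp.mem_support_iff.mpr hne
      have := Finset.le_sup (f := id) hmem
      simp only [id] at this
      omega
    have hgb : ∑ j ∈ Finset.range N, ((component R ℕ (fun n => ↥(D n)) j b : C)) = 0 := by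
      have hb' := DirectSum.sum_support_of b
      have h2 : ∑ j ∈ DFinsupp.support b, ((component R ℕ (fun n => ↥(D n)) j b : C)) =
          gmap D b := by
        conv_rhs => rw [← hb']
        rw [map_sum]
        exact Finset.sum_congr rfl fun j _ => (gmap_of D j _).symm
      have hsub : DFinsupp.support b ⊆ Finset.range N := by
        intro k hk
        have := Finset.le_sup (f := id) hk
        simp only [id] at this
        rw [Finset.mem_range]
        omega
      rw [Finset.sum_subset hsub (fun k _ hk => by
        rw [show component R ℕ (fun n => ↥(D n)) k b = b k from rfl,
          DFinsupp.notMem_support_iff.mp hk, Submodule.coe_zero])] at h2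
      rw [h2, hb]
    have hmem : ∀ k : ℕ, k < N → (∑ j ∈ Finset.range (k + 1), ((component R ℕ
        (fun n => ↥(D n)) j b : C))) ∈ D k := by
      intro k _
      exact Submodule.sum_mem _ fun j hj =>
        hmono (Nat.lt_succ_iff.mp (Finset.mem_range.mp hj)) (component R ℕ _ j b).2
    set a : ⨁ n, ↥(D n) := DirectSum.mk (fun n => ↥(D n)) (Finset.range N)
      (fun k => ⟨∑ j ∈ Finset.range ((k : ℕ) + 1),
        ((component R ℕ (fun n => ↥(D n)) j b : C)),
        hmem k (Finset.mem_range.mp k.2)⟩) with hadef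
    have hlt : ∀ m, m < N → ((component R ℕ (fun n => ↥(D n)) m a : C)) =
        ∑ j ∈ Finset.range (m + 1), ((component R ℕ (fun n => ↥(D n)) j b : C)) := by
      intro m hm
      have := DirectSum.mk_apply_of_mem (β := fun n => ↥(D n))
        (f := fun k => (⟨∑ j ∈ Finset.range ((k : ℕ) + 1),
          ((component R ℕ (fun n => ↥(D n)) j b : C)),
          hmem k (Finset.mem_range.mp k.2)⟩ : ↥(D k.1)))
        (Finset.mem_range.mpr hm)
      rw [← hadef] at this
      rw [show component R ℕ (fun n => ↥(D n)) m a = a m from rfl, this]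
    have hge : ∀ m, N ≤ m → component R ℕ (fun n => ↥(D n)) m a = 0 := by
      intro m hm
      have := DirectSum.mk_apply_of_notMem (β := fun n => ↥(D n))
        (f := fun k => (⟨∑ j ∈ Finset.range ((k : ℕ) + 1),
          ((component R ℕ (fun n => ↥(D n)) j b : C)),
          hmem k (Finset.mem_range.mp k.2)⟩ : ↥(D k.1)))
        (by rw [Finset.mem_range]; omega : m ∉ Finset.range N)
      rw [← hadef] at this
      rw [show component R ℕ (fun n => ↥(D n)) m a = a m from rfl, this]
    refine ⟨a, ?_⟩
    refine DirectSum.ext_component R fun m => ?_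
    cases m with
    | zero =>
      rw [component_fmap_zero]
      refine Subtype.ext ?_
      rw [hlt 0 (by omega), Finset.sum_range_one]
    | succ k =>
      rw [component_fmap_succ]
      refine Subtype.ext ?_
      rw [AddSubgroupClass.coe_sub, Submodule.coe_inclusion]
      rcases lt_or_ge (k + 1) N with h | h
      · rw [hlt (k + 1) h, hlt k (by omega), Finset.sum_range_succ, add_sub_cancel_left]
      · rw [hge (k + 1) h, hbz (k + 1) h, Submodule.coe_zero, zero_sub]
        by_cases h2 : k < N
        · have hkN : k + 1 = N := by omega
          rw [hlt k h2, hkN, hgb, neg_zero]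
        · rw [hge k (by omega), Submodule.coe_zero, neg_zero]

end Telescope2

section MainAux

variable {R : Type} [CommRing R] [IsDomain R] {C : Type} [AddCommGroup C] [Module R C]

lemma torsionfree_of_flat [Module.Flat R C] (r : R) (hr : r ≠ 0) : IsSMulRegular C r := by
  have hR : IsSMulRegular R r := fun x y hxy => by
    exact mul_left_cancel₀ hr (by simpa [smul_eq_mul] using hxy)
  have h2 := IsSMulRegular.rTensor (R := R) C hR
  exact ((TensorProduct.lid R C).isSMulRegular_congr r).mp h2

lemma range_le_DD (e : ℕ → C) (hcov : ∀ c : C, ∃ n, c ∈ DD (R := R) e n)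
    {X : Type} [AddCommGroup X] [Module R X] (hrank : Module.rank R X < Cardinal.aleph0)
    (φ : X →ₗ[R] C) : ∃ n, LinearMap.range φ ≤ DD (R := R) e n := by
  classical
  by_contra hno
  push_neg at hno
  have h' : ∀ n, ∃ x : X, φ x ∉ DD (R := R) e n := by
    intro n
    obtain ⟨c, hc1, hc2⟩ := SetLike.not_le_iff_exists.mp (hno n)
    obtain ⟨x, rfl⟩ := hc1
    exact ⟨x, hc2⟩
  choose w hw using h'
  choose d hd using fun n => hcov (φ (w n))
  let nn : ℕ → ℕ := fun k => Nat.rec 0 (fun _ nk => max (d nk) nk + 1) k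
  have hnn : ∀ k, nn (k + 1) = max (d (nn k)) (nn k) + 1 := fun k => rfl
  have hMnn : Monotone nn := monotone_nat_of_le_succ fun k => by
    rw [hnn]; exact Nat.le_succ_of_le (le_max_right _ _)
  have hstep : ∀ k, φ (w (nn k)) ∈ DD (R := R) e (nn (k + 1)) := fun k =>
    DD_mono e (by rw [hnn]; exact Nat.le_succ_of_le (le_max_left _ _)) (hd (nn k))
  have hprev : ∀ i k, i < k → φ (w (nn i)) ∈ DD (R := R) e (nn k) := fun i k hik =>
    DD_mono e (hMnn (show i + 1 ≤ k from hik)) (hstep i)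
  have hli : LinearIndependent R fun k => w (nn k) := by
    rw [linearIndependent_iff']
    intro t gc hrel i hi
    by_contra hgi
    set T := t.filter (fun j => gc j ≠ 0) with hT
    have hTne : T.Nonempty := ⟨i, Finset.mem_filter.mpr ⟨hi, hgi⟩⟩
    set K := T.max' hTne with hK
    have hKT : K ∈ T := T.max'_mem hTne
    have hKt : K ∈ t := (Finset.mem_filter.mp hKT).1
    have hgK : gc K ≠ 0 := (Finset.mem_filter.mp hKT).2
    have hrelC : ∑ j ∈ t, gc j • φ (w (nn j)) = 0 := by
      have h4 := congrArg φ hrel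
      simpa [map_sum, map_smul] using h4
    have hKeq : gc K • φ (w (nn K)) = - ∑ j ∈ t.erase K, gc j • φ (w (nn j)) := by
      have h3 := Finset.sum_erase_add t (fun j => gc j • φ (w (nn j))) hKt
      rw [hrelC] at h3
      exact eq_neg_of_add_eq_zero_right h3
    have hmem : gc K • φ (w (nn K)) ∈ DD (R := R) e (nn K) := by
      rw [hKeq]
      refine Submodule.neg_mem _ (Submodule.sum_mem _ fun j hj => ?_)
      by_cases hgj : gc j = 0
      · rw [hgj, zero_smul]; exact Submodule.zero_mem _
      · have hjT : j ∈ T := Finset.mem_filter.mpr ⟨Finset.mem_of_mem_erase hj, hgj⟩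
        have hjK : j ≠ K := Finset.ne_of_mem_erase hj
        have hjlt : j < K := lt_of_le_of_ne (Finset.le_max' T j hjT) hjK
        exact Submodule.smul_mem _ _ (hprev j K hjlt)
    exact hw (nn K) (DD_saturated hgK hmem)
  exact (not_le_of_gt hrank) hli.aleph0_le_rank

end MainAux

/-- Let `R` be a countable Prüfer domain and `C` a countable flat `R`-module.
Then there is a short exact sequence `0 → A → B → C → 0` in which `A` and `B` are isomorphic
to direct sums of countably many finite-rank flat modules, and every map from a finite-rank
flat module to `C` lifts along `B → C`. -/
theorem stmt12 (R : Type) [CommRing R] [IsDomain R] [Countable R]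
    (hPrufer : ∀ I : Ideal R, I.FG → Module.Projective R I)
    (C : Type) [AddCommGroup C] [Module R C] [Countable C] [Module.Flat R C] :
    ∃ (A B : ModuleCat.{0} R) (f : A →ₗ[R] B) (g : B →ₗ[R] C),
      (∃ FA : ℕ → ModuleCat.{0} R,
          (∀ n, Module.Flat R (FA n)) ∧ (∀ n, Module.rank R (FA n) < Cardinal.aleph0) ∧
          Nonempty ((A : Type) ≃ₗ[R] ⨁ n : ℕ, FA n)) ∧
      (∃ FB : ℕ → ModuleCat.{0} R,
          (∀ n, Module.Flat R (FB n)) ∧ (∀ n, Module.rank R (FB n) < Cardinal.aleph0) ∧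
          Nonempty ((B : Type) ≃ₗ[R] ⨁ n : ℕ, FB n)) ∧
      Function.Injective f ∧ Function.Surjective g ∧
      LinearMap.range f = LinearMap.ker g ∧
      ∀ (X : Type) [AddCommGroup X] [Module R X],
        Module.Flat R X → Module.rank R X < Cardinal.aleph0 →
        ∀ φ : X →ₗ[R] C, ∃ ψ : X →ₗ[R] B, g ∘ₗ ψ = φ := by
  classical
  obtain ⟨e, he⟩ := exists_surjective_nat C
  have htfC : ∀ r : R, r ≠ 0 → IsSMulRegular C r := fun r hr => torsionfree_of_flat r hr
  have hcov : ∀ c : C, ∃ n, c ∈ DD (R := R) e n := fun c => by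
    obtain ⟨k, rfl⟩ := he c
    exact ⟨k + 1, mem_DD e k⟩
  refine ⟨ModuleCat.of R (⨁ n, ↥(DD (R := R) e n)),
    ModuleCat.of R (⨁ n, ↥(DD (R := R) e n)),
    fmap _ (DD_mono e), gmap _,
    ⟨fun n => ModuleCat.of R ↥(DD (R := R) e n),
      fun n => flat_DD e hPrufer htfC n, fun n => rank_DD_lt e htfC n,
      ⟨LinearEquiv.refl R _⟩⟩,
    ⟨fun n => ModuleCat.of R ↥(DD (R := R) e n),
      fun n => flat_DD e hPrufer htfC n, fun n => rank_DD_lt e htfC n,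
      ⟨LinearEquiv.refl R _⟩⟩,
    fmap_injective _ _, gmap_surjective _ hcov, range_fmap _ _, ?_⟩
  intro X _ _ _hflat hrank φ
  obtain ⟨n, hn⟩ := range_le_DD e hcov hrank φ
  refine ⟨(lof R ℕ (fun k => ↥(DD (R := R) e k)) n) ∘ₗ
    LinearMap.codRestrict (DD (R := R) e n) φ (fun x => hn ⟨x, rfl⟩), ?_⟩
  refine LinearMap.ext fun x => ?_
  show gmap _ (lof R ℕ (fun k => ↥(DD (R := R) e k)) n _) = φ x
  rw [lof_eq_of R, gmap_of]
  rfl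
end

section
/- Let R be a Prüfer domain, B a countable flat R-module, and A a pure submodule of B; set C := B/A. Let (ξ_i)_{i∈I} be a family of elements of B and I_A ⊆ I a subset with ξ_i ∈ A for all i ∈ I_A. If the family (ξ_i)_{i∈I_A} is minimal in A and the family of images (ξ_i + A)_{i∈I∖I_A} is minimal in C, then the family (ξ_i)_{i∈I} is minimal in B. -/
/-- A submodule `N` of a (torsion-free) module `M` over a domain is *pure* if whenever
`r ≠ 0` and `r • x ∈ N` for some `x ∈ M`, already `x ∈ N`. -/
def IsPureSubmodule {R : Type} [CommRing R] {M : Type} [AddCommGroup M] [Module R M]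
    (N : Submodule R M) : Prop :=
  ∀ r : R, r ≠ 0 → ∀ x : M, r • x ∈ N → x ∈ N

/-- A family `ξ` of elements of a (torsion-free) module `M` over a domain is *minimal* if it is
`R`-linearly independent and the submodule it generates is pure in `M`. -/
def IsMinimalFamily (R : Type) [CommRing R] {M : Type} [AddCommGroup M] [Module R M]
    {ι : Type} (ξ : ι → M) : Prop :=
  LinearIndependent R ξ ∧ IsPureSubmodule (Submodule.span R (Set.range ξ))

/-- Let `R` be a Prüfer domain, `B` a countable flat `R`-module, `A` a pure
submodule of `B`, and `C := B/A`. If `(ξ_i)_{i ∈ I_A}` is a minimal family in `A` and the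
images `(ξ_i + A)_{i ∈ I \ I_A}` form a minimal family in `C`, then `(ξ_i)_{i ∈ I}` is a
minimal family in `B`. -/
theorem stmt13 (R : Type) [CommRing R] [IsDomain R]
    (hPrufer : ∀ I : Ideal R, I.FG → Module.Projective R I)
    (B : Type) [AddCommGroup B] [Module R B] [Countable B] [Module.Flat R B]
    (A : Submodule R B) (hA : IsPureSubmodule A)
    (ι : Type) (ξ : ι → B) (IA : Set ι)
    (hmem : ∀ i ∈ IA, ξ i ∈ A)
    (hAmin : IsMinimalFamily R fun i : IA => (⟨ξ i, hmem i i.2⟩ : A))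
    (hCmin : IsMinimalFamily R fun i : ↥(IAᶜ) => A.mkQ (ξ i)) :
    IsMinimalFamily R ξ := by
  classical
  set ξA : ↥IA → A := fun i => (⟨ξ i, hmem i i.2⟩ : A) with hξA
  set SA : Submodule R B := Submodule.span R (Set.range fun i : ↥IA => ξ i) with hSA
  set SC : Submodule R B := Submodule.span R (Set.range fun i : ↥(IAᶜ) => ξ i) with hSC
  have hSA_le_A : SA ≤ A := by
    rw [hSA, Submodule.span_le]
    rintro _ ⟨i, rfl⟩
    exact hmem i i.2
  -- the complement-span meets `A` trivially
  have hdisj : Disjoint A SC := by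
    rw [Submodule.disjoint_def]
    intro x hxA hxS
    obtain ⟨c, rfl⟩ := Finsupp.mem_span_range_iff_exists_finsupp.mp hxS
    have h0 : A.mkQ (c.sum fun i a => a • ξ i) = 0 := by
      rw [Submodule.mkQ_apply, Submodule.Quotient.mk_eq_zero]
      exact hxA
    rw [map_finsuppSum] at h0
    simp only [map_smul] at h0
    have hc : c = 0 := by
      refine linearIndependent_iff.mp hCmin.1 c ?_
      rw [Finsupp.linearCombination_apply]
      exact h0
    simp [hc]
  have hdisj' : Disjoint SA SC := hdisj.mono_left hSA_le_A
  have hspan : Submodule.span R (Set.range ξ) = SA ⊔ SC := by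
    rw [hSA, hSC, ← Submodule.span_union]
    congr 1
    ext x
    constructor
    · rintro ⟨i, rfl⟩
      by_cases h : i ∈ IA
      · exact Or.inl ⟨⟨i, h⟩, rfl⟩
      · exact Or.inr ⟨⟨i, h⟩, rfl⟩
    · rintro (⟨i, rfl⟩ | ⟨i, rfl⟩) <;> exact ⟨i.1, rfl⟩
  have hA_LI : LinearIndependent R (fun i : ↥IA => ξ i) :=
    hAmin.1.map' A.subtype (Submodule.ker_subtype A)
  have hC_LI : LinearIndependent R (fun i : ↥(IAᶜ) => ξ i) :=
    LinearIndependent.of_comp A.mkQ hCmin.1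
  constructor
  · -- linear independence
    have hsum : LinearIndependent R (ξ ∘ (Equiv.sumCompl (· ∈ IA))) := by
      rw [linearIndependent_sum]
      exact ⟨hA_LI, hC_LI, hdisj'⟩
    exact (linearIndependent_equiv (Equiv.sumCompl (· ∈ IA))).mp hsum
  · -- purity
    intro r hr x hx
    rw [hspan] at hx
    obtain ⟨a, haSA, b, hbSC, hab⟩ := Submodule.mem_sup.mp hx
    have haA : a ∈ A := hSA_le_A haSA
    have hmapSC : Submodule.map A.mkQ SC
        = Submodule.span R (Set.range fun i : ↥(IAᶜ) => A.mkQ (ξ i)) := by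
      rw [hSC, Submodule.map_span]
      congr 1
      rw [← Set.range_comp]
      rfl
    have hq : r • (A.mkQ x) ∈ Submodule.span R (Set.range fun i : ↥(IAᶜ) => A.mkQ (ξ i)) := by
      rw [← hmapSC, ← map_smul]
      have : A.mkQ (r • x) = A.mkQ b := by
        rw [← hab, map_add]
        have : A.mkQ a = 0 := by
          rw [Submodule.mkQ_apply, Submodule.Quotient.mk_eq_zero]; exact haA
        rw [this, zero_add]
      rw [this]
      exact Submodule.mem_map_of_mem hbSC
    have hxq := hCmin.2 r hr (A.mkQ x) hq
    rw [← hmapSC] at hxq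
    obtain ⟨b', hb'SC, hb'⟩ := hxq
    have hyA : x - b' ∈ A := by
      rw [← Submodule.Quotient.eq A]
      have := hb'.symm
      rwa [Submodule.mkQ_apply, Submodule.mkQ_apply] at this
    -- the difference `b - r • b'` lies in both `A` and `SC`, hence vanishes
    have hdiffA : b - r • b' ∈ A := by
      have h1 : b - r • b' = r • (x - b') - a := by
        rw [smul_sub, ← hab]; abel
      rw [h1]
      exact A.sub_mem (A.smul_mem r hyA) haA
    have hdiffSC : b - r • b' ∈ SC := SC.sub_mem hbSC (SC.smul_mem r hb'SC)
    have hdiff0 : b - r • b' = 0 := Submodule.disjoint_def.mp hdisj _ hdiffA hdiffSC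
    have hkey : r • (x - b') = a := by
      have h2 : r • (x - b') - a = 0 := by
        rw [smul_sub, ← hab]
        calc a + b - r • b' - a = b - r • b' := by abel
        _ = 0 := hdiff0
      exact sub_eq_zero.mp h2
    -- pull back into `A` and use minimality there
    have hmapSA : Submodule.map A.subtype (Submodule.span R (Set.range ξA)) = SA := by
      rw [hSA, Submodule.map_span]
      congr 1
      rw [← Set.range_comp]
      rfl
    have haSA' : a ∈ Submodule.map A.subtype (Submodule.span R (Set.range ξA)) := by
      rw [hmapSA]; exact haSA
    obtain ⟨a', ha'S, ha'⟩ := haSA'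
    have hy' : r • (⟨x - b', hyA⟩ : A) ∈ Submodule.span R (Set.range ξA) := by
      have : r • (⟨x - b', hyA⟩ : A) = a' := by
        apply Subtype.ext
        simp only [SetLike.mk_smul_mk]
        rw [hkey, ← ha']
        rfl
      rw [this]; exact ha'S
    have hy'' := hAmin.2 r hr _ hy'
    have hySA : x - b' ∈ SA := by
      rw [← hmapSA]
      exact Submodule.mem_map_of_mem hy''
    have h1 : x - b' ∈ Submodule.span R (Set.range ξ) := by
      rw [hspan]; exact Submodule.mem_sup_left hySA
    have h2 : b' ∈ Submodule.span R (Set.range ξ) := by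
      rw [hspan]; exact Submodule.mem_sup_right hb'SC
    have := Submodule.add_mem _ h1 h2
    rwa [sub_add_cancel] at this
end

section
/- Let R be a discrete valuation ring with uniformizer π (an irreducible element generating the maximal ideal), and let M be a torsion-free R-module with ⋂_{n∈ℕ} πⁿ·M = 0. Let ι : M → M̂ be the canonical map into the π-adic completion M̂ = lim_n M/πⁿM. Then ι is injective and its image is a pure submodule of M̂: for every x ∈ M̂ and every k ∈ ℕ, if πᵏ·x ∈ ι(M) then x ∈ ι(M). -/
/-- Let `R` be a discrete valuation ring with uniformizer `π`, and `M` a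
torsion-free `R`-module with `⋂ₙ πⁿ·M = 0`. Then the canonical map `ι : M → M̂` into the
`π`-adic completion is injective, and its image is pure in `M̂`: whenever `πᵏ • x ∈ ι(M)` for
`x ∈ M̂`, already `x ∈ ι(M)`. -/
theorem stmt15 (R : Type) [CommRing R] [IsDomain R] [IsDiscreteValuationRing R]
    (π : R) (hπ : Irreducible π)
    (M : Type) [AddCommGroup M] [Module R M]
    (htf : ∀ (r : R) (x : M), r • x = 0 → r = 0 ∨ x = 0)
    (hsep : ∀ x : M, (∀ n : ℕ, ∃ y : M, x = π ^ n • y) → x = 0) :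
    Function.Injective (AdicCompletion.of (Ideal.span {π}) M) ∧
    ∀ (x : AdicCompletion (Ideal.span {π}) M) (k : ℕ),
      π ^ k • x ∈ LinearMap.range (AdicCompletion.of (Ideal.span {π}) M) →
      x ∈ LinearMap.range (AdicCompletion.of (Ideal.span {π}) M) := by
  set I := Ideal.span ({π} : Set R) with hI
  -- membership in `I ^ n • ⊤` is divisibility by `π ^ n`
  have hmem : ∀ (n : ℕ) (x : M),
      x ∈ (I ^ n • ⊤ : Submodule R M) ↔ ∃ y, π ^ n • y = x := by
    intro n x
    constructor
    · intro hx
      rw [hI, Ideal.span_singleton_pow] at hx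
      refine Submodule.smul_induction_on hx ?_ ?_
      · intro r hr m _
        obtain ⟨c, rfl⟩ := Ideal.mem_span_singleton.mp hr
        exact ⟨c • m, (mul_smul _ _ _).symm⟩
      · rintro a b ⟨ya, rfl⟩ ⟨yb, rfl⟩
        exact ⟨ya + yb, by rw [smul_add]⟩
    · rintro ⟨y, rfl⟩
      have hp : π ^ n ∈ I ^ n := by
        rw [hI, Ideal.span_singleton_pow]
        exact Ideal.mem_span_singleton_self _
      exact Submodule.smul_mem_smul hp Submodule.mem_top
  -- injectivity
  have hker : ∀ m : M, AdicCompletion.of I M m = 0 → m = 0 := by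
    intro m hm
    refine hsep m fun n => ?_
    have h1 : (AdicCompletion.of I M m).val n = 0 := by rw [hm]; rfl
    have h2 : m ∈ (I ^ n • ⊤ : Submodule R M) := by
      rw [← Submodule.Quotient.mk_eq_zero (I ^ n • ⊤ : Submodule R M)]
      exact h1
    obtain ⟨y, hy⟩ := (hmem n m).mp h2
    exact ⟨y, hy.symm⟩
  have hinj : Function.Injective (AdicCompletion.of I M) := by
    intro a b hab
    have h0 : AdicCompletion.of I M (a - b) = 0 := by
      rw [map_sub, hab, sub_self]
    exact sub_eq_zero.mp (hker _ h0)
  refine ⟨hinj, ?_⟩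
  -- the completion is π-torsion-free
  have htfc : ∀ x : AdicCompletion I M, π • x = 0 → x = 0 := by
    intro x hx
    ext n
    show x.val n = 0
    obtain ⟨u, hu⟩ := Submodule.Quotient.mk_surjective
      (I ^ (n + 1) • ⊤ : Submodule R M) (x.val (n + 1))
    have hπu : π • u ∈ (I ^ (n + 1) • ⊤ : Submodule R M) := by
      have h1 : (π • x).val (n + 1) = 0 := by rw [hx]; rfl
      rw [AdicCompletion.val_smul_apply, ← hu, ← Submodule.Quotient.mk_smul] at h1
      rwa [← Submodule.Quotient.mk_eq_zero (I ^ (n + 1) • ⊤ : Submodule R M)]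
    obtain ⟨v, hv⟩ := (hmem (n + 1) (π • u)).mp hπu
    have huv : u = π ^ n • v := by
      have hps : π • (π ^ n • v) = π ^ (n + 1) • v := by
        rw [← mul_smul, ← pow_succ']
      have h0 : π • (u - π ^ n • v) = 0 := by
        rw [smul_sub, hps, hv, sub_self]
      rcases htf _ _ h0 with h | h
      · exact absurd h hπ.ne_zero
      · exact sub_eq_zero.mp h
    have hxn : x.val n = Submodule.Quotient.mk u := by
      rw [← x.property (Nat.le_succ n), ← hu]
      rfl
    rw [hxn, huv, Submodule.Quotient.mk_eq_zero]
    exact (hmem n _).mpr ⟨v, rfl⟩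
  -- purity, step of size one
  have hstep : ∀ x : AdicCompletion I M,
      π • x ∈ LinearMap.range (AdicCompletion.of I M) →
      x ∈ LinearMap.range (AdicCompletion.of I M) := by
    rintro x ⟨m, hm⟩
    obtain ⟨u, hu⟩ := Submodule.Quotient.mk_surjective
      (I ^ 1 • ⊤ : Submodule R M) (x.val 1)
    have hmu : m - π • u ∈ (I ^ 1 • ⊤ : Submodule R M) := by
      have h1 : (Submodule.Quotient.mk m : M ⧸ (I ^ 1 • ⊤ : Submodule R M)) =
          Submodule.Quotient.mk (π • u) := by
        rw [Submodule.Quotient.mk_smul, hu]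
        exact congrArg (fun z => z.val 1) hm
      exact (Submodule.Quotient.eq _).mp h1
    obtain ⟨w, hw⟩ := (hmem 1 _).mp hmu
    have hmfac : m = π • (u + w) := by
      rw [pow_one] at hw
      rw [smul_add, hw]
      abel
    refine ⟨u + w, ?_⟩
    have h0 : π • (x - AdicCompletion.of I M (u + w)) = 0 := by
      rw [smul_sub, ← map_smul, ← hmfac, hm, sub_self]
    exact (sub_eq_zero.mp (htfc _ h0)).symm
  intro x k hk
  induction k generalizing x with
  | zero => simpa using hk
  | succ k ih =>
    have h1 : π • (π ^ k • x) ∈ LinearMap.range (AdicCompletion.of I M) := by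
      rw [← mul_smul, ← pow_succ']
      exact hk
    exact ih x (hstep _ h1)
end

section
/- Let R be a discrete valuation ring with fraction field K and uniformizer π. Let (τ_n)_{n∈ℕ} be a sequence in R such that: π divides τ_0 − 1; π^{n+1} divides τ_{n+1} − τ_n for every n; and for every triple (a, b, c) ∈ R³ with (a, b, c) ≠ (0, 0, 0) there exists n such that π^{n+1} does not divide a + b·τ_n + c·τ_n². Let Ξ be the R-submodule of K × K generated by e := (1, 0), f := (0, 1), and g_n := (π^{−n}, −π^{−n}·τ_n) for all n ∈ ℕ. Then Ξ is rigid: for every R-linear endomorphism φ : Ξ → Ξ there exists r ∈ R such that φ(x) = r·x for all x ∈ Ξ. -/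
/-- Let `R` be a discrete valuation ring with fraction field `K` and
uniformizer `π`, and let `(τ_n)` be a coherent sequence in `R` with `τ_0 ≡ 1 mod π`,
`τ_{n+1} ≡ τ_n mod π^{n+1}`, and such that `1, τ, τ²` are "linearly independent over `K`"
(in the sense that for every `(a,b,c) ≠ 0` some `a + b·τ_n + c·τ_n²` is not divisible by
`π^{n+1}`). Let `Ξ` be the `R`-submodule of `K × K` generated by `e = (1,0)`, `f = (0,1)` and
`g_n = (π^{-n}, -π^{-n}·τ_n)`. Then `Ξ` is rigid: every `R`-linear endomorphism of `Ξ` is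
multiplication by some `r ∈ R`. -/
theorem stmt16 (R : Type) [CommRing R] [IsDomain R] [IsDiscreteValuationRing R]
    (K : Type) [Field K] [Algebra R K] [IsFractionRing R K]
    (π : R) (hπ : Irreducible π)
    (τ : ℕ → R)
    (h0 : π ∣ τ 0 - 1)
    (hcoh : ∀ n : ℕ, π ^ (n + 1) ∣ τ (n + 1) - τ n)
    (hindep : ∀ a b c : R, ¬(a = 0 ∧ b = 0 ∧ c = 0) →
      ∃ n : ℕ, ¬(π ^ (n + 1) ∣ a + b * τ n + c * τ n ^ 2))
    (Ξ : Submodule R (K × K))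
    (hΞ : Ξ = Submodule.span R
      ({((1 : K), (0 : K)), ((0 : K), (1 : K))} ∪
        Set.range fun n : ℕ =>
          (((algebraMap R K π) ^ n)⁻¹,
            -(((algebraMap R K π) ^ n)⁻¹ * algebraMap R K (τ n)))))
    (φ : Ξ →ₗ[R] Ξ) :
    ∃ r : R, ∀ x : Ξ, φ x = r • x := by
  classical
  have hinj : Function.Injective (algebraMap R K) := IsFractionRing.injective R K
  have hπ0 : π ≠ 0 := hπ.ne_zero
  have hp0 : algebraMap R K π ≠ 0 := fun h => hπ0 (hinj (by simpa using h))
  have hpn0 : ∀ n : ℕ, (algebraMap R K π) ^ n ≠ 0 := fun n => pow_ne_zero n hp0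
  -- coherence for all pairs
  have coh2 : ∀ m m' : ℕ, m ≤ m' → π ^ (m + 1) ∣ τ m' - τ m := by
    intro m m' h
    induction m', h using Nat.le_induction with
    | base => simp
    | succ n hn ih =>
        have h1 : π ^ (m + 1) ∣ τ (n + 1) - τ n :=
          dvd_trans (pow_dvd_pow π (by omega)) (hcoh n)
        have := dvd_add h1 ih
        simpa using this
  -- monotonicity of the denominator-bound property
  have hmono : ∀ (m m' : ℕ), m ≤ m' → ∀ x y : K,
      ((algebraMap R K π) ^ m * x ∈ Set.range (algebraMap R K) ∧
        y + algebraMap R K (τ m) * x ∈ Set.range (algebraMap R K)) →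
      ((algebraMap R K π) ^ m' * x ∈ Set.range (algebraMap R K) ∧
        y + algebraMap R K (τ m') * x ∈ Set.range (algebraMap R K)) := by
    intro m m' hmm x y ⟨⟨s, hs⟩, ⟨t, ht⟩⟩
    obtain ⟨d, hd⟩ := coh2 m m' hmm
    constructor
    · refine ⟨π ^ (m' - m) * s, ?_⟩
      rw [map_mul, map_pow, hs, ← mul_assoc, ← pow_add]
      congr 2
      omega
    · refine ⟨t + π * d * s, ?_⟩
      have hτ : τ m' = τ m + π ^ (m + 1) * d := by rw [← hd]; ring
      rw [map_add, map_mul, map_mul, hs, ht, hτ, map_add, map_mul, map_pow]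
      ring
  -- the enveloping submodule Q
  set Q : Submodule R (K × K) :=
    { carrier := {z : K × K | ∃ m : ℕ,
        (algebraMap R K π) ^ m * z.1 ∈ Set.range (algebraMap R K) ∧
        z.2 + algebraMap R K (τ m) * z.1 ∈ Set.range (algebraMap R K)}
      zero_mem' := ⟨0, ⟨0, by simp⟩, ⟨0, by simp⟩⟩
      add_mem' := by
        rintro a b ⟨m, hm⟩ ⟨m', hm'⟩
        obtain ⟨⟨s, hs⟩, ⟨t, ht⟩⟩ := hmono m (max m m') (le_max_left _ _) a.1 a.2 hm
        obtain ⟨⟨s', hs'⟩, ⟨t', ht'⟩⟩ := hmono m' (max m m') (le_max_right _ _) b.1 b.2 hm'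
        refine ⟨max m m', ⟨s + s', ?_⟩, ⟨t + t', ?_⟩⟩
        · rw [map_add, hs, hs', Prod.fst_add]; ring
        · rw [map_add, ht, ht', Prod.fst_add, Prod.snd_add]; ring
      smul_mem' := by
        rintro r z ⟨m, ⟨s, hs⟩, ⟨t, ht⟩⟩
        refine ⟨m, ⟨r * s, ?_⟩, ⟨r * t, ?_⟩⟩
        · rw [map_mul, hs, Prod.smul_fst, Algebra.smul_def]; ring
        · rw [map_mul, ht, Prod.smul_fst, Prod.smul_snd, Algebra.smul_def,
            Algebra.smul_def]
          ring } with hQ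
  have hΞQ : Ξ ≤ Q := by
    rw [hΞ, Submodule.span_le]
    rintro z (hz | ⟨n, rfl⟩)
    · simp only [Set.mem_insert_iff, Set.mem_singleton_iff] at hz
      rcases hz with rfl | rfl
      · exact ⟨0, ⟨1, by simp⟩, ⟨τ 0, by simp⟩⟩
      · exact ⟨0, ⟨0, by simp⟩, ⟨1, by simp⟩⟩
    · refine ⟨n, ⟨1, by simp [mul_inv_cancel₀ (hpn0 n)]⟩, ⟨0, ?_⟩⟩
      show algebraMap R K 0
        = -(((algebraMap R K π) ^ n)⁻¹ * algebraMap R K (τ n))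
          + algebraMap R K (τ n) * ((algebraMap R K π) ^ n)⁻¹
      rw [map_zero]; ring
  -- the generators as elements of Ξ
  have he : ((1 : K), (0 : K)) ∈ Ξ := by
    rw [hΞ]; exact Submodule.subset_span (Or.inl (by simp))
  have hf : ((0 : K), (1 : K)) ∈ Ξ := by
    rw [hΞ]; exact Submodule.subset_span (Or.inl (by simp))
  have hg : ∀ n : ℕ,
      ((((algebraMap R K π) ^ n)⁻¹ : K),
        -(((algebraMap R K π) ^ n)⁻¹ * algebraMap R K (τ n))) ∈ Ξ := by
    intro n; rw [hΞ]; exact Submodule.subset_span (Or.inr ⟨n, rfl⟩)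
  set E : Ξ := ⟨((1 : K), (0 : K)), he⟩ with hE
  set F : Ξ := ⟨((0 : K), (1 : K)), hf⟩ with hF
  set G : ℕ → Ξ := fun n =>
    ⟨((((algebraMap R K π) ^ n)⁻¹ : K),
      -(((algebraMap R K π) ^ n)⁻¹ * algebraMap R K (τ n))), hg n⟩ with hG
  set u : K × K := (φ E : K × K) with hu
  set w : K × K := (φ F : K × K) with hw
  -- the key relation π^n • G n = E - τ n • F
  have hrelG : ∀ n : ℕ, (π ^ n : R) • G n = E - (τ n) • F := by
    intro n
    apply Subtype.ext
    show (π ^ n : R) • ((((algebraMap R K π) ^ n)⁻¹ : K),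
        -(((algebraMap R K π) ^ n)⁻¹ * algebraMap R K (τ n)))
      = ((1 : K), (0 : K)) - (τ n) • ((0 : K), (1 : K))
    apply Prod.ext
    · show (π ^ n : R) • ((((algebraMap R K π) ^ n)⁻¹ : K)) = 1 - (τ n) • (0 : K)
      rw [Algebra.smul_def, Algebra.smul_def, map_pow]
      simp [mul_inv_cancel₀ (hpn0 n)]
    · show (π ^ n : R) • (-(((algebraMap R K π) ^ n)⁻¹ * algebraMap R K (τ n)))
        = 0 - (τ n) • (1 : K)
      rw [Algebra.smul_def, Algebra.smul_def, map_pow]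
      field_simp
      ring
  have hrel : ∀ n : ℕ, (π ^ n : R) • (φ (G n)) = φ E - (τ n) • (φ F) := by
    intro n
    rw [← map_smul, hrelG n, map_sub, map_smul]
  -- value form of the relation
  have hval1 : ∀ n : ℕ, (algebraMap R K π) ^ n * (φ (G n) : K × K).1
      = u.1 - algebraMap R K (τ n) * w.1 := by
    intro n
    have := congrArg (fun x : Ξ => (x : K × K).1) (hrel n)
    simpa [Algebra.smul_def, map_pow, hu, hw] using this
  have hval2 : ∀ n : ℕ, (algebraMap R K π) ^ n * (φ (G n) : K × K).2
      = u.2 - algebraMap R K (τ n) * w.2 := by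
    intro n
    have := congrArg (fun x : Ξ => (x : K × K).2) (hrel n)
    simpa [Algebra.smul_def, map_pow, hu, hw] using this
  -- bounded denominators for elements of Q
  have hden : ∀ z : K × K, z ∈ Q → ∃ (k : ℕ) (a b : R),
      (algebraMap R K π) ^ k * z.1 = algebraMap R K a ∧
      (algebraMap R K π) ^ k * z.2 = algebraMap R K b := by
    rintro z ⟨m, ⟨s, hs⟩, ⟨t, ht⟩⟩
    refine ⟨m, s, π ^ m * t - τ m * s, hs.symm, ?_⟩
    rw [map_sub, map_mul, map_mul, map_pow, hs, ht]
    ring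
  obtain ⟨k₁, A', B', hA, hB⟩ := hden u (hΞQ (φ E).2)
  obtain ⟨k₂, C', D', hC, hD⟩ := hden w (hΞQ (φ F).2)
  -- the divisibility statement
  set a : R := π ^ (k₂ + 1) * B' with ha
  set b : R := π ^ (k₂ + 1) * A' - π ^ (k₁ + 1) * D' with hb
  set c : R := -(π ^ (k₁ + 1) * C') with hc
  have hdvd : ∀ n : ℕ, π ^ (n + 1) ∣ a + b * τ n + c * τ n ^ 2 := by
    intro n
    obtain ⟨m, hm⟩ := hΞQ (φ (G n)).2
    obtain ⟨⟨s, hs⟩, ⟨t, ht⟩⟩ :=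
      hmono m (max m n) (le_max_left _ _) (φ (G n) : K × K).1 (φ (G n) : K × K).2 hm
    set M := max m n with hM
    obtain ⟨d, hd⟩ := coh2 n M (le_max_right _ _)
    -- the master identity in R
    have hmaster : π ^ (k₂ + 1) * B' - τ n * (π ^ (k₁ + 1) * D')
        + τ M * (π ^ (k₂ + 1) * A' - τ n * (π ^ (k₁ + 1) * C'))
        = π ^ (n + k₁ + k₂ + 1) * t := by
      apply hinj
      rw [map_mul, map_pow]
      calc algebraMap R K (π ^ (k₂ + 1) * B' - τ n * (π ^ (k₁ + 1) * D')
            + τ M * (π ^ (k₂ + 1) * A' - τ n * (π ^ (k₁ + 1) * C')))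
          = (algebraMap R K π) ^ (k₂ + 1) * algebraMap R K B'
            - algebraMap R K (τ n) * ((algebraMap R K π) ^ (k₁ + 1) * algebraMap R K D')
            + algebraMap R K (τ M) * ((algebraMap R K π) ^ (k₂ + 1) * algebraMap R K A'
              - algebraMap R K (τ n)
                * ((algebraMap R K π) ^ (k₁ + 1) * algebraMap R K C')) := by
            rw [map_add, map_sub, map_mul, map_mul, map_mul, map_mul, map_sub, map_mul,
              map_mul, map_mul, map_pow, map_pow]
        _ = (algebraMap R K π) ^ (k₂ + 1) * ((algebraMap R K π) ^ k₁ * u.2)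
            - algebraMap R K (τ n)
              * ((algebraMap R K π) ^ (k₁ + 1) * ((algebraMap R K π) ^ k₂ * w.2))
            + algebraMap R K (τ M)
              * ((algebraMap R K π) ^ (k₂ + 1) * ((algebraMap R K π) ^ k₁ * u.1)
                - algebraMap R K (τ n)
                  * ((algebraMap R K π) ^ (k₁ + 1) * ((algebraMap R K π) ^ k₂ * w.1))) := by
            rw [hA, hB, hC, hD]
        _ = (algebraMap R K π) ^ (k₁ + k₂ + 1) * ((u.2 - algebraMap R K (τ n) * w.2)
              + algebraMap R K (τ M) * (u.1 - algebraMap R K (τ n) * w.1)) := by ring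
        _ = (algebraMap R K π) ^ (k₁ + k₂ + 1)
              * ((algebraMap R K π) ^ n * (φ (G n) : K × K).2
                + algebraMap R K (τ M) * ((algebraMap R K π) ^ n * (φ (G n) : K × K).1)) := by
            rw [hval1 n, hval2 n]
        _ = (algebraMap R K π) ^ (n + k₁ + k₂ + 1)
              * ((φ (G n) : K × K).2 + algebraMap R K (τ M) * (φ (G n) : K × K).1) := by
            ring
        _ = (algebraMap R K π) ^ (n + k₁ + k₂ + 1) * algebraMap R K t := by rw [ht]
    refine ⟨π ^ (k₁ + k₂) * t - d * (π ^ (k₂ + 1) * A' - τ n * (π ^ (k₁ + 1) * C')), ?_⟩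
    have hτM : τ M = τ n + π ^ (n + 1) * d := by rw [← hd]; ring
    rw [ha, hb, hc]
    linear_combination hmaster - (π ^ (k₂ + 1) * A' - τ n * (π ^ (k₁ + 1) * C')) * hτM
  -- conclude a = b = c = 0
  have habc : a = 0 ∧ b = 0 ∧ c = 0 := by
    by_contra h
    obtain ⟨n, hn⟩ := hindep a b c h
    exact hn (hdvd n)
  obtain ⟨ha0, hb0, hc0⟩ := habc
  have hπk : ∀ k : ℕ, (π : R) ^ k ≠ 0 := fun k => pow_ne_zero k hπ0
  have hB'0 : B' = 0 := by
    rcases mul_eq_zero.mp ha0 with h | h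
    · exact absurd h (hπk _)
    · exact h
  have hC'0 : C' = 0 := by
    have h' : π ^ (k₁ + 1) * C' = 0 := by
      have := hc0
      rw [hc, neg_eq_zero] at this
      exact this
    rcases mul_eq_zero.mp h' with h | h
    · exact absurd h (hπk _)
    · exact h
  have hu2 : u.2 = 0 := by
    have h' : (algebraMap R K π) ^ k₁ * u.2 = 0 := by rw [hB, hB'0, map_zero]
    rcases mul_eq_zero.mp h' with h | h
    · exact absurd h (hpn0 _)
    · exact h
  have hw1 : w.1 = 0 := by
    have h' : (algebraMap R K π) ^ k₂ * w.1 = 0 := by rw [hC, hC'0, map_zero]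
    rcases mul_eq_zero.mp h' with h | h
    · exact absurd h (hpn0 _)
    · exact h
  have huw : u.1 = w.2 := by
    have hR : π ^ (k₂ + 1) * A' = π ^ (k₁ + 1) * D' := by
      have := hb0
      rw [hb, sub_eq_zero] at this
      exact this
    have hK : (algebraMap R K π) ^ (k₁ + k₂ + 1) * u.1
        = (algebraMap R K π) ^ (k₁ + k₂ + 1) * w.2 := by
      have h1 : (algebraMap R K π) ^ (k₂ + 1) * ((algebraMap R K π) ^ k₁ * u.1)
          = (algebraMap R K π) ^ (k₁ + 1) * ((algebraMap R K π) ^ k₂ * w.2) := by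
        rw [hA, hD, ← map_pow, ← map_pow, ← map_mul, ← map_mul]
        exact congrArg _ hR
      calc (algebraMap R K π) ^ (k₁ + k₂ + 1) * u.1
          = (algebraMap R K π) ^ (k₂ + 1) * ((algebraMap R K π) ^ k₁ * u.1) := by ring
        _ = (algebraMap R K π) ^ (k₁ + 1) * ((algebraMap R K π) ^ k₂ * w.2) := h1
        _ = (algebraMap R K π) ^ (k₁ + k₂ + 1) * w.2 := by ring
    exact mul_left_cancel₀ (hpn0 _) hK
  -- find r
  obtain ⟨m₀, _, ⟨r, hr⟩⟩ := hΞQ (φ F).2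
  have hw2 : w.2 = algebraMap R K r := by
    rw [← hw] at hr
    rw [hw1, mul_zero, add_zero] at hr
    exact hr.symm
  refine ⟨r, ?_⟩
  -- φ agrees with r • on the generators
  have hφE : φ E = r • E := by
    apply Subtype.ext
    show u = r • (((1 : K), (0 : K)) : K × K)
    have h' : u = (algebraMap R K r, 0) := Prod.ext (by rw [huw, hw2]) hu2
    rw [h']
    apply Prod.ext
    · show algebraMap R K r = r • (1 : K); rw [Algebra.smul_def, mul_one]
    · show (0 : K) = r • (0 : K); rw [smul_zero]
  have hφF : φ F = r • F := by
    apply Subtype.ext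
    show w = r • (((0 : K), (1 : K)) : K × K)
    have h' : w = (0, algebraMap R K r) := Prod.ext hw1 hw2
    rw [h']
    apply Prod.ext
    · show (0 : K) = r • (0 : K); rw [smul_zero]
    · show algebraMap R K r = r • (1 : K); rw [Algebra.smul_def, mul_one]
  have hφG : ∀ n : ℕ, φ (G n) = r • G n := by
    intro n
    have h1 : (π ^ n : R) • (φ (G n)) = (π ^ n : R) • (r • G n) := by
      rw [hrel n, hφE, hφF, smul_comm (π ^ n : R) r, hrelG n, smul_sub, smul_comm r (τ n)]
    have h2 := congrArg (fun x : Ξ => (x : K × K)) h1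
    apply Subtype.ext
    have hsm : ∀ x : Ξ, (((π ^ n : R) • x : Ξ) : K × K)
        = ((algebraMap R K π) ^ n) • (x : K × K) := by
      intro x
      show (π ^ n : R) • (x : K × K) = ((algebraMap R K π) ^ n) • (x : K × K)
      rw [← map_pow, algebraMap_smul]
    simp only [hsm] at h2
    exact smul_right_injective (K × K) (hpn0 n) h2
  -- conclude by span induction via eqLocus
  have hT : Ξ ≤ Submodule.map Ξ.subtype (LinearMap.eqLocus φ (r • LinearMap.id)) := by
    conv_lhs => rw [hΞ]
    rw [Submodule.span_le]
    rintro z (hz | ⟨n, rfl⟩)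
    · simp only [Set.mem_insert_iff, Set.mem_singleton_iff] at hz
      rcases hz with rfl | rfl
      · exact ⟨E, by simpa [LinearMap.eqLocus] using hφE, rfl⟩
      · exact ⟨F, by simpa [LinearMap.eqLocus] using hφF, rfl⟩
    · exact ⟨G n, by simpa [LinearMap.eqLocus] using hφG n, rfl⟩
  intro x
  obtain ⟨y, hy, hyx⟩ := hT x.2
  have hxy : y = x := Subtype.ext hyx
  subst hxy
  simpa [LinearMap.eqLocus] using hy
end

section
/- Let R be a discrete valuation ring with fraction field K and uniformizer π, and let (τ_n)_{n∈ℕ} be a sequence in R such that π divides τ_0 − 1 and π^{n+1} divides τ_{n+1} − τ_n for every n. Let Ξ be the R-submodule of K × K generated by e := (1, 0), f := (0, 1), and g_n := (π^{−n}, −π^{−n}·τ_n) for n ∈ ℕ. Then e is a minimal element of Ξ: if x ∈ Ξ and d ∈ ℕ satisfy π^d·x = e, then d = 0; consequently the submodule R·e is pure in Ξ, i.e., for every nonzero r ∈ R and x ∈ Ξ with r·x ∈ R·e one has x ∈ R·e. -/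
/-- Let `R` be a discrete valuation ring with fraction field `K` and
uniformizer `π`, and let `(τ_n)` be a sequence in `R` with `τ_0 ≡ 1 mod π` and
`τ_{n+1} ≡ τ_n mod π^{n+1}`. Let `Ξ` be the `R`-submodule of `K × K` generated by `e = (1,0)`,
`f = (0,1)` and `g_n = (π^{-n}, -π^{-n}·τ_n)`. Then `e` is a minimal element of `Ξ`:
`π^d • x = e` with `x ∈ Ξ` forces `d = 0`, and the cyclic submodule `R·e` is pure in `Ξ`. -/
theorem stmt17 (R : Type) [CommRing R] [IsDomain R] [IsDiscreteValuationRing R]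
    (K : Type) [Field K] [Algebra R K] [IsFractionRing R K]
    (π : R) (hπ : Irreducible π)
    (τ : ℕ → R)
    (h0 : π ∣ τ 0 - 1)
    (hcoh : ∀ n : ℕ, π ^ (n + 1) ∣ τ (n + 1) - τ n)
    (Ξ : Submodule R (K × K))
    (hΞ : Ξ = Submodule.span R
      ({((1 : K), (0 : K)), ((0 : K), (1 : K))} ∪
        Set.range fun n : ℕ =>
          (((algebraMap R K π) ^ n)⁻¹,
            -(((algebraMap R K π) ^ n)⁻¹ * algebraMap R K (τ n))))) :
    (∀ x ∈ Ξ, ∀ d : ℕ, π ^ d • x = ((1 : K), (0 : K)) → d = 0) ∧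
    (∀ r : R, r ≠ 0 → ∀ x ∈ Ξ,
      r • x ∈ Submodule.span R ({((1 : K), (0 : K))} : Set (K × K)) →
      x ∈ Submodule.span R ({((1 : K), (0 : K))} : Set (K × K))) := by
  have hπ0 : π ≠ 0 := hπ.ne_zero
  have hinj : Function.Injective (algebraMap R K) := IsFractionRing.injective R K
  have hι0 : ∀ r : R, r ≠ 0 → algebraMap R K r ≠ 0 := by
    intro r hr h
    exact hr (hinj (by simpa using h))
  have hπK : algebraMap R K π ≠ 0 := hι0 π hπ0
  have hπKn : ∀ n : ℕ, (algebraMap R K π) ^ n ≠ 0 := fun n => pow_ne_zero n hπK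
  -- τ n ≡ 1 mod π, hence τ n is a unit
  have hτ1 : ∀ n, π ∣ τ n - 1 := by
    intro n
    induction n with
    | zero => exact h0
    | succ n ih =>
      have h2 : π ∣ τ (n + 1) - τ n :=
        dvd_trans (dvd_pow_self π (Nat.succ_ne_zero n)) (hcoh n)
      have he : τ (n + 1) - 1 = (τ (n + 1) - τ n) + (τ n - 1) := by ring
      rw [he]; exact dvd_add h2 ih
  have hτu : ∀ n, IsUnit (τ n) := by
    intro n
    by_contra h
    have hmem : τ n ∈ IsLocalRing.maximalIdeal R := h
    rw [hπ.maximalIdeal_eq, Ideal.mem_span_singleton] at hmem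
    have : π ∣ 1 := by
      have he : (1 : R) = τ n - (τ n - 1) := by ring
      rw [he]; exact dvd_sub hmem (hτ1 n)
    exact hπ.not_isUnit (isUnit_of_dvd_one this)
  -- notation
  set e : K × K := ((1 : K), (0 : K)) with he
  set f : K × K := ((0 : K), (1 : K)) with hf
  set g : ℕ → K × K := fun n =>
    (((algebraMap R K π) ^ n)⁻¹,
      -(((algebraMap R K π) ^ n)⁻¹ * algebraMap R K (τ n))) with hg
  set S : ℕ → Submodule R (K × K) := fun n => Submodule.span R {e, f, g n} with hS
  -- the relation g n = π • g (n+1) + (π * v) • f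
  have hrel : ∀ n : ℕ, ∃ v : R, g n = π • g (n + 1) + (π * v) • f := by
    intro n
    obtain ⟨v, hv⟩ := hcoh n
    refine ⟨v, ?_⟩
    have hτe : τ (n + 1) = τ n + π ^ (n + 1) * v := by
      linear_combination hv
    apply Prod.ext
    · simp only [hg, Prod.fst_add, Prod.smul_fst, Prod.snd_add, smul_eq_mul, Algebra.smul_def (A := K)]
      rw [map_mul]
      field_simp
      ring
    · simp only [hg, hf, Prod.snd_add, Prod.smul_snd, Algebra.smul_def (A := K)]
      rw [hτe]
      push_cast [map_add, map_mul, map_pow]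
      field_simp
      ring
  have hmono : Monotone S := by
    apply monotone_nat_of_le_succ
    intro n
    rw [hS]
    apply Submodule.span_le.mpr
    intro y hy
    rcases hy with h | h | h
    · exact h ▸ Submodule.subset_span (by left; rfl)
    · exact h ▸ Submodule.subset_span (by right; left; rfl)
    · rw [Set.mem_singleton_iff] at h
      subst h
      obtain ⟨v, hv⟩ := hrel n
      rw [hv]
      exact Submodule.add_mem _
        (Submodule.smul_mem _ _ (Submodule.subset_span (by right; right; rfl)))
        (Submodule.smul_mem _ _ (Submodule.subset_span (by right; left; rfl)))
  have hΞle : Ξ ≤ ⨆ n, S n := by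
    rw [hΞ]
    apply Submodule.span_le.mpr
    intro y hy
    rcases hy with (h | h) | ⟨n, rfl⟩
    · exact (le_iSup S 0) (h ▸ Submodule.subset_span (by left; rfl))
    · rw [Set.mem_singleton_iff] at h
      exact (le_iSup S 0) (h ▸ Submodule.subset_span (by right; left; rfl))
    · exact (le_iSup S n) (Submodule.subset_span (by right; right; rfl))
  -- key lemma: elements of Ξ with vanishing second coordinate are R-multiples of e
  have hkey : ∀ x ∈ Ξ, x.2 = 0 → ∃ w : R, x = w • e := by
    intro x hx hx2
    obtain ⟨n, hxn⟩ :=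
      (Submodule.mem_iSup_of_directed S hmono.directed_le).mp (hΞle hx)
    have hxn' : x ∈ Submodule.span R (insert e (insert f {g n})) := hxn
    rw [Submodule.mem_span_insert] at hxn'
    replace hxn := hxn'
    obtain ⟨a, z, hz, hxz⟩ := hxn
    rw [Submodule.mem_span_insert] at hz
    obtain ⟨b, z', hz', hzz⟩ := hz
    rw [Submodule.mem_span_singleton] at hz'
    obtain ⟨c, hc⟩ := hz'
    subst hc hzz hxz
    -- compute coordinates
    have h2 : (algebraMap R K b) + (algebraMap R K c) *
        (-(((algebraMap R K π) ^ n)⁻¹ * algebraMap R K (τ n))) = 0 := by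
      have := hx2
      simpa [hg, he, hf, Prod.snd_add, Prod.smul_snd, Algebra.smul_def] using this
    have hbc : b * π ^ n = c * τ n := by
      apply hinj
      push_cast [map_mul, map_pow]
      have hn := hπKn n
      field_simp at h2 ⊢
      linear_combination h2
    obtain ⟨u, hu⟩ := hτu n
    have hc' : c = b * π ^ n * ((u⁻¹ : Rˣ) : R) := by
      have : c * (u : R) = b * π ^ n := by rw [hu]; linear_combination -hbc
      calc c = c * (u : R) * ((u⁻¹ : Rˣ) : R) := by
              rw [mul_assoc, Units.mul_inv, mul_one]
        _ = b * π ^ n * ((u⁻¹ : Rˣ) : R) := by rw [this]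
    refine ⟨a + b * ((u⁻¹ : Rˣ) : R), ?_⟩
    apply Prod.ext
    · simp only [he, hg, Prod.fst_add, Prod.smul_fst, Algebra.smul_def (A := K), mul_one]
      rw [hc']
      push_cast [map_add, map_mul, map_pow]
      field_simp
      ring
    · simpa [he, Prod.smul_snd, Algebra.smul_def] using hx2
  constructor
  · intro x hx d hd
    have hx2 : x.2 = 0 := by
      have h2 : (π ^ d : R) • x.2 = 0 := by
        rw [← Prod.smul_snd, hd]
      rw [Algebra.smul_def] at h2
      rcases mul_eq_zero.mp h2 with h | h
      · exact absurd h (hι0 _ (pow_ne_zero d hπ0))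
      · exact h
    obtain ⟨w, hw⟩ := hkey x hx hx2
    have h1 : algebraMap R K (π ^ d * w) = algebraMap R K 1 := by
      have := congrArg Prod.fst hd
      rw [hw] at this
      simpa [he, Prod.smul_fst, Algebra.smul_def, smul_smul, map_mul, map_pow] using this
    have h2 : π ^ d * w = 1 := hinj h1
    by_contra hd0
    have : π ∣ π ^ d := dvd_pow_self π hd0
    exact hπ.not_isUnit (isUnit_of_dvd_unit this (IsUnit.of_mul_eq_one _ h2))
  · intro r hr x hx hrx
    rw [Submodule.mem_span_singleton] at hrx
    obtain ⟨s, hs⟩ := hrx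
    have hx2 : x.2 = 0 := by
      have h2 : algebraMap R K r * x.2 = 0 := by
        have := congrArg Prod.snd hs.symm
        simpa [he, Prod.smul_snd, Algebra.smul_def] using this
      rcases mul_eq_zero.mp h2 with h | h
      · exact absurd h (hι0 _ hr)
      · exact h
    obtain ⟨w, hw⟩ := hkey x hx hx2
    rw [Submodule.mem_span_singleton]
    exact ⟨w, hw.symm⟩
end

section
/- Let R be a countable ring, and let C and A be topological R-modules whose underlying topological spaces are Polish and whose addition, negation, and scalar multiplication maps x ↦ r·x (for each r ∈ R) are continuous. Let c : C × C → A and ρ : R × C → A be continuous functions (R carrying the discrete topology) satisfying, for all r, s ∈ R and x, y, z ∈ C: c(x, 0) = 0; c(x, y) = c(y, x); c(x + y, z) + c(x, y) = c(x, y + z) + c(y, z); ρ(r + s, x) = c(r·x, s·x) + ρ(r, x) + ρ(s, x); and c(r·x, r·y) + ρ(r, x) + ρ(r, y) = ρ(r, x + y) + r·c(x, y). If ξ : C → A is a Borel-measurable function such that c(x, y) = ξ(x + y) − ξ(x) − ξ(y) for all x, y ∈ C, then ξ is continuous. -/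
open Filter Topology Set

/-- A Borel measurable function between suitable topological spaces is continuous
(within) on a residual set. -/
lemma exists_residual_continuousWithinAt {X Y : Type*} [TopologicalSpace X] [TopologicalSpace Y]
    [MeasurableSpace X] [BorelSpace X] [MeasurableSpace Y] [OpensMeasurableSpace Y]
    [SecondCountableTopology Y]
    {f : X → Y} (hf : Measurable f) :
    ∃ D ∈ residual X, ∀ x ∈ D, ContinuousWithinAt f D x := by
  classical
  obtain ⟨B, hBc, -, hB⟩ := TopologicalSpace.exists_countable_basis Y
  have key : ∀ V ∈ B, ∃ U : Set X, IsOpen U ∧ f ⁻¹' V =ᵇ U := fun V hV =>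
    ((hf (hB.isOpen hV).measurableSet).baireMeasurableSet).residualEq_isOpen
  choose! U hUopen hUeq using key
  refine ⟨⋂ V ∈ B, {x | x ∈ f ⁻¹' V ↔ x ∈ U V}, ?_, ?_⟩
  · exact (countable_bInter_mem hBc).2 fun V hV => (hUeq V hV).mono
      (by intro x hx; exact eq_iff_iff.mp hx)
  · intro x hx
    intro W hW
    rw [Filter.mem_map]
    obtain ⟨V, hVB, hxV, hVW⟩ := hB.mem_nhds_iff.1 hW
    have hxiff : x ∈ f ⁻¹' V ↔ x ∈ U V := by
      have := mem_iInter₂.1 hx V hVB; exact this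
    have hxU : x ∈ U V := hxiff.1 hxV
    refine Filter.mem_of_superset
      (inter_mem_nhdsWithin _ ((hUopen V hVB).mem_nhds hxU)) ?_
    rintro y ⟨hyD, hyU⟩
    have hyiff : y ∈ f ⁻¹' V ↔ y ∈ U V := mem_iInter₂.1 hyD V hVB
    exact hVW (hyiff.2 hyU)

/-- Let `R` be a countable ring and `C`, `A` Polish topological `R`-modules.
Let `(c, ρ)` be a continuous 2-cocycle on `C` with values in `A` (with `R` discrete, so that
continuity of `ρ` amounts to continuity in the second variable for each fixed scalar).
If a Borel-measurable function `ξ : C → A` satisfies `c(x,y) = ξ(x+y) - ξ(x) - ξ(y)` for all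
`x, y`, then `ξ` is continuous. -/
theorem stmt18 (R : Type) [Ring R] [Countable R]
    (C A : Type) [AddCommGroup C] [Module R C] [AddCommGroup A] [Module R A]
    [TopologicalSpace C] [PolishSpace C] [IsTopologicalAddGroup C] [ContinuousConstSMul R C]
    [TopologicalSpace A] [PolishSpace A] [IsTopologicalAddGroup A] [ContinuousConstSMul R A]
    [MeasurableSpace C] [BorelSpace C] [MeasurableSpace A] [BorelSpace A]
    (c : C → C → A) (ρ : R → C → A)
    (hc : Continuous fun p : C × C => c p.1 p.2)
    (hρ : ∀ r : R, Continuous fun x : C => ρ r x)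
    (h1 : ∀ x : C, c x 0 = 0)
    (h2 : ∀ x y : C, c x y = c y x)
    (h3 : ∀ x y z : C, c (x + y) z + c x y = c x (y + z) + c y z)
    (h4 : ∀ (r s : R) (x : C), ρ (r + s) x = c (r • x) (s • x) + ρ r x + ρ s x)
    (h5 : ∀ (r : R) (x y : C),
      c (r • x) (r • y) + ρ r x + ρ r y = ρ r (x + y) + r • c x y)
    (ξ : C → A) (hξ : Measurable ξ)
    (hcob : ∀ x y : C, c x y = ξ (x + y) - ξ x - ξ y) :
    Continuous ξ := by
  letI := TopologicalSpace.upgradeIsCompletelyMetrizable C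
  have hξ0 : ξ 0 = 0 := by
    have := hcob 0 0
    rw [h1 0] at this
    simpa using this.symm
  -- sequential continuity at 0
  have key0 : ∀ u : ℕ → C, Tendsto u atTop (𝓝 0) →
      Tendsto (fun n => ξ (u n)) atTop (𝓝 0) := by
    intro u hu
    obtain ⟨D, hD, hDcont⟩ := exists_residual_continuousWithinAt hξ
    -- find t with t ∈ D and u n + t ∈ D for all n
    have htr : ∀ n : ℕ, (fun t : C => u n + t) ⁻¹' D ∈ residual C := by
      intro n
      have hhom := (Homeomorph.addLeft (u n)).residual_map_eq
      rw [← hhom] at hD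
      exact hD
    have hE : (D ∩ ⋂ n, (fun t : C => u n + t) ⁻¹' D) ∈ residual C :=
      Filter.inter_mem hD ((countable_iInter_mem).2 htr)
    obtain ⟨t, htD, htn⟩ : ∃ t, t ∈ D ∧ ∀ n, u n + t ∈ D := by
      obtain ⟨t, ht⟩ := (dense_of_mem_residual hE).nonempty
      exact ⟨t, ht.1, fun n => mem_iInter.1 ht.2 n⟩
    -- ξ (u n) = ξ (u n + t) - ξ t - c (u n) t
    have heq : ∀ n, ξ (u n) = ξ (u n + t) - ξ t - c (u n) t := by
      intro n
      have := hcob (u n) t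
      rw [this]; abel
    have hlim1 : Tendsto (fun n => ξ (u n + t)) atTop (𝓝 (ξ t)) := by
      have hmem : Tendsto (fun n => u n + t) atTop (𝓝[D] t) := by
        rw [tendsto_nhdsWithin_iff]
        constructor
        · have : Tendsto (fun n => u n + t) atTop (𝓝 (0 + t)) :=
            (hu.add tendsto_const_nhds)
          simpa using this
        · exact Filter.Eventually.of_forall htn
      exact (hDcont t htD).tendsto.comp hmem
    have hlim2 : Tendsto (fun n => c (u n) t) atTop (𝓝 0) := by
      have : Tendsto (fun n => ((u n, t) : C × C)) atTop (𝓝 (0, t)) :=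
        (hu.prodMk_nhds tendsto_const_nhds)
      have := (hc.tendsto (0, t)).comp this
      simpa [Function.comp_def, h2 0 t ▸ h1 t, (h2 (0:C) t).symm, h1 t, h2 t 0] using this
    have := (hlim1.sub (tendsto_const_nhds (x := ξ t))).sub hlim2
    simp only [sub_self, sub_zero] at this
    exact this.congr fun n => (heq n).symm
  -- full continuity via sequences
  have hseq : SeqContinuous ξ := by
    intro u x₀ hu
    have hdiff : Tendsto (fun n => u n - x₀) atTop (𝓝 0) := by
      have : Tendsto (fun n => u n - x₀) atTop (𝓝 (x₀ - x₀)) :=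
        hu.sub tendsto_const_nhds
      simpa using this
    have hk := key0 _ hdiff
    have heq : ∀ n, ξ (u n) = ξ (u n - x₀) + ξ x₀ + c (u n - x₀) x₀ := by
      intro n
      have := hcob (u n - x₀) x₀
      rw [sub_add_cancel] at this
      rw [this]; abel
    have hlim2 : Tendsto (fun n => c (u n - x₀) x₀) atTop (𝓝 0) := by
      have h' : Tendsto (fun n => ((u n - x₀, x₀) : C × C)) atTop (𝓝 (0, x₀)) :=
        hdiff.prodMk_nhds tendsto_const_nhds
      have := (hc.tendsto (0, x₀)).comp h'
      simpa [Function.comp_def, h2 (0:C) x₀, h1 x₀] using this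
    have := (hk.add (tendsto_const_nhds (x := ξ x₀))).add hlim2
    simp only [zero_add, add_zero] at this
    exact this.congr fun n => (heq n).symm
  exact continuous_iff_seqContinuous.2 hseq
end

section
/- Let R be a countable Dedekind domain that is not a field, M a countable flat (torsion-free) R-module, and E a submodule of M. For each nonzero prime ideal 𝔭 of R, let M_𝔭 and E_𝔭 denote the localizations of M and E at 𝔭, regarded as modules over the localization R_𝔭, with E_𝔭 identified with its image in M_𝔭. Then E is pure in M (for every nonzero r ∈ R and x ∈ M, r·x ∈ E implies x ∈ E) if and only if for every nonzero prime ideal 𝔭 of R the submodule E_𝔭 is pure in M_𝔭 (for every nonzero s ∈ R_𝔭 and y ∈ M_𝔭, s·y ∈ E_𝔭 implies y ∈ E_𝔭). -/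
/-- Let `R` be a countable Dedekind domain which is not a field, `M` a
countable flat `R`-module, and `E` a submodule of `M`. Then `E` is pure in `M` if and only if
for every nonzero prime ideal `𝔭` of `R` the localized submodule `E_𝔭` is pure in `M_𝔭`. -/
theorem stmt19 (R : Type) [CommRing R] [IsDomain R] [IsDedekindDomain R] [Countable R]
    (hnf : ¬IsField R)
    (M : Type) [AddCommGroup M] [Module R M] [Countable M] [Module.Flat R M]
    (E : Submodule R M) :
    (∀ r : R, r ≠ 0 → ∀ x : M, r • x ∈ E → x ∈ E) ↔
      ∀ (𝔭 : Ideal R) [𝔭.IsPrime], 𝔭 ≠ ⊥ →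
        ∀ s : Localization 𝔭.primeCompl, s ≠ 0 →
          ∀ y : LocalizedModule 𝔭.primeCompl M,
            s • y ∈ E.localized 𝔭.primeCompl → y ∈ E.localized 𝔭.primeCompl := by
  constructor
  · intro h 𝔭 _ h𝔭 s hs y hsy
    induction s using Localization.ind with
    | _ ru =>
    obtain ⟨r, u⟩ := ru
    have hr : r ≠ 0 := by
      rintro rfl
      exact hs (Localization.mk_zero u)
    induction y using LocalizedModule.induction_on with
    | h m v =>
      rw [LocalizedModule.mk_smul_mk] at hsy
      obtain ⟨e, he, t, het⟩ := (Submodule.mem_localized' _ _ _ _ _).mp hsy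
      rw [← IsLocalizedModule.mk_eq_mk' (S := 𝔭.primeCompl) t e] at het
      obtain ⟨c, hc⟩ := LocalizedModule.mk_eq.mp het
      -- hc : c • (u * v) • e = c • t • (r • m)
      have hmem : ((c : R) * t * r) • m ∈ E := by
        have : ((c : R) * t * r) • m = ((c : R) * (u * v)) • e := by
          simp only [mul_smul, ← Submonoid.smul_def]
          rw [← hc]
          simp [mul_smul, Submonoid.smul_def]
        rw [this]
        exact E.smul_mem _ he
      have hne : (c : R) * t * r ≠ 0 := by
        have hc0 : (c : R) ≠ 0 := fun h0 => c.2 (h0 ▸ 𝔭.zero_mem)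
        have ht0 : (t : R) ≠ 0 := fun h0 => t.2 (h0 ▸ 𝔭.zero_mem)
        exact mul_ne_zero (mul_ne_zero hc0 ht0) hr
      have hm : m ∈ E := h _ hne m hmem
      exact (Submodule.mem_localized' _ _ _ _ _).mpr
        ⟨m, hm, v, (IsLocalizedModule.mk_eq_mk' (S := 𝔭.primeCompl) v m).symm⟩
  · intro h r hr x hrx
    refine Submodule.mem_of_localization_maximal
      (fun P _ => LocalizedModule P.primeCompl M)
      (fun P _ => LocalizedModule.mkLinearMap P.primeCompl M) x E (fun P hP => ?_)
    have hPbot : P ≠ ⊥ := Ring.ne_bot_of_isMaximal_of_not_isField hP hnf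
    have hloc := h P hPbot (algebraMap R (Localization P.primeCompl) r) ?_
        (LocalizedModule.mk x 1) ?_
    · obtain ⟨e, he, t, het⟩ := (Submodule.mem_localized' _ _ _ _ _).mp hloc
      exact ⟨e, he, t, het.trans (LocalizedModule.mkLinearMap_apply _ _ _).symm⟩
    · have : Function.Injective (algebraMap R (Localization P.primeCompl)) :=
        IsLocalization.injective _ P.primeCompl_le_nonZeroDivisors
      simpa using fun h0 => hr (this (by simpa using h0))
    · have : (algebraMap R (Localization P.primeCompl) r) • (LocalizedModule.mk x 1 :
          LocalizedModule P.primeCompl M) = LocalizedModule.mk (r • x) 1 := by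
        rw [show (algebraMap R (Localization P.primeCompl) r) = Localization.mk r 1 by
          rw [Localization.mk_eq_mk', IsLocalization.mk'_one]]
        rw [LocalizedModule.mk_smul_mk, one_mul]
      rw [this]
      exact (Submodule.mem_localized' _ _ _ _ _).mpr
        ⟨r • x, hrx, 1, (IsLocalizedModule.mk_eq_mk' (S := P.primeCompl) 1 (r • x)).symm⟩
end
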